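/- arXiv:0809.3699 — 5 statements merged into one kernel-verified Lean document; each statement's English description precedes it below -/
import Mathlib

section
/- For every z ∈ ℍ, writing z = r·e^{iθ} with 0 < θ < π, one has sin²θ = (Im z)²/|z|² ≤ 4·exp(−2δ), where δ is the hyperbolic distance from z to the positive imaginary axis {w ∈ ℍ : Re w = 0}. -/
open UpperHalfPlane

/-- For `z ∈ ℍ` written as `z = r e^{iθ}` with `0 < θ < π` (so `θ = arg z`),
`sin²θ = (Im z)²/|z|² ≤ 4 e^{-2δ}`, where `δ` is the hyperbolic distance from `z`
to the positive imaginary axis `{w ∈ ℍ : Re w = 0}`. -/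
theorem sin_sq_le_exp_dist_to_axis (z : ℍ) :
    Real.sin (Complex.arg (z : ℂ)) ^ 2 = z.im ^ 2 / ‖(z : ℂ)‖ ^ 2 ∧
    z.im ^ 2 / ‖(z : ℂ)‖ ^ 2
      ≤ 4 * Real.exp (-2 * ⨅ w : {w : ℍ // (w : ℂ).re = 0}, dist z (w : ℍ)) := by
  have him : 0 < z.im := z.im_pos
  have hr : 0 < ‖(z : ℂ)‖ :=
    lt_of_lt_of_le him (le_trans (le_abs_self _) (Complex.abs_im_le_norm _))
  constructor
  · rw [Complex.sin_arg, div_pow, UpperHalfPlane.coe_im]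
  set r := ‖(z : ℂ)‖ with hrdef
  have hw : (Complex.I * (r : ℂ)).im = r := by simp
  let w : ℍ := ⟨Complex.I * (r : ℝ), by rw [hw]; exact hr⟩
  have hwim : w.im = r := hw
  have hwre : (w : ℂ).re = 0 := by simp [w]
  -- cosh dist formula
  have hdistsq : dist (z : ℂ) (w : ℂ) ^ 2 = 2 * r * (r - z.im) := by
    rw [Complex.dist_eq, Complex.sq_norm, Complex.normSq_apply]
    have h1 : ((z : ℂ) - w).re = (z : ℂ).re := by simp [w]
    have h2 : ((z : ℂ) - w).im = z.im - r := by simp [w, UpperHalfPlane.coe_im]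
    rw [h1, h2]
    have : (z : ℂ).re ^ 2 + (z : ℂ).im ^ 2 = r ^ 2 := by
      rw [hrdef, Complex.sq_norm, Complex.normSq_apply]
      ring
    nlinarith [this, UpperHalfPlane.coe_im z]
  have hcosh : Real.cosh (dist z w) = r / z.im := by
    rw [UpperHalfPlane.cosh_dist, hdistsq, hwim]
    field_simp
    ring
  -- infimum ≤ this distance
  set δ := ⨅ w : {w : ℍ // (w : ℂ).re = 0}, dist z (w : ℍ) with hδ
  have hle : δ ≤ dist z w := by
    apply ciInf_le _ (⟨w, hwre⟩ : {w : ℍ // (w : ℂ).re = 0})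
    exact ⟨0, by rintro _ ⟨p, rfl⟩; exact dist_nonneg⟩
  have hexp : Real.exp δ ≤ 2 * (r / z.im) := by
    calc Real.exp δ ≤ Real.exp (dist z w) := Real.exp_le_exp.2 hle
      _ ≤ 2 * Real.cosh (dist z w) := by
          rw [Real.cosh_eq]; have := Real.exp_pos (-(dist z w)); nlinarith
      _ = 2 * (r / z.im) := by rw [hcosh]
  -- conclude
  have key : Real.exp δ * z.im ≤ 2 * r := by
    have := mul_le_mul_of_nonneg_right hexp him.le
    have h4 : 2 * (r / z.im) * z.im = 2 * r := by field_simp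
    linarith [h4 ▸ this]
  have h1 : z.im ≤ 2 * r * Real.exp (-δ) := by
    have h2 := mul_le_mul_of_nonneg_left key (Real.exp_pos (-δ)).le
    have h3 : Real.exp (-δ) * (Real.exp δ * z.im) = z.im := by
      rw [← mul_assoc, ← Real.exp_add]; simp
    rw [h3] at h2; linarith
  have hexpsq : Real.exp (-δ) * Real.exp (-δ) = Real.exp (-2 * δ) := by
    rw [← Real.exp_add]; ring_nf
  rw [div_le_iff₀ (by positivity)]
  nlinarith [h1, him.le, hexpsq, Real.exp_pos (-δ), hr]
end

section
/- Let r₀ > 0 and let f : ℂ → ℂ be holomorphic on the open exterior region {w : |w| > r₀}, continuous on {w : |w| ≥ r₀}, with f(w) → 0 as |w| → ∞. Then for every w with |w| ≥ r₀: |f(w)| ≤ (r₀/|w|) · max_{|ζ| = r₀} |f(ζ)|. -/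
open Filter Bornology

/-- Exterior Schwarz lemma: if `f` is holomorphic on `{|w| > r₀}`, continuous on
`{|w| ≥ r₀}`, and `f(w) → 0` as `|w| → ∞`, then for every `w` with `|w| ≥ r₀`,
`|f(w)| ≤ (r₀/|w|) · max_{|ζ|=r₀} |f(ζ)|`. -/
theorem exterior_schwarz_lemma (r₀ : ℝ) (hr₀ : 0 < r₀) (f : ℂ → ℂ)
    (hf : DifferentiableOn ℂ f {w : ℂ | r₀ < ‖w‖})
    (hc : ContinuousOn f {w : ℂ | r₀ ≤ ‖w‖})
    (h0 : Tendsto f (cobounded ℂ) (nhds 0)) :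
    ∀ w : ℂ, r₀ ≤ ‖w‖ →
      ‖f w‖
        ≤ (r₀ / ‖w‖) * ⨆ ζ : Metric.sphere (0 : ℂ) r₀, ‖f ζ‖ := by
  set M : ℝ := ⨆ ζ : Metric.sphere (0 : ℂ) r₀, ‖f ζ‖ with hM
  -- the sup is over a compact set, so it is a real sup that bounds everything
  have hbdd : BddAbove (Set.range fun ζ : Metric.sphere (0 : ℂ) r₀ => ‖f ζ‖) := by
    have hsub : Metric.sphere (0 : ℂ) r₀ ⊆ {w : ℂ | r₀ ≤ ‖w‖} := by
      intro w hw
      simp only [Metric.mem_sphere, Complex.dist_eq, sub_zero] at hw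
      simp [Set.mem_setOf_eq, hw.symm.le]
    have hcont : ContinuousOn (fun w => ‖f w‖) (Metric.sphere (0 : ℂ) r₀) :=
      (hc.mono hsub).norm
    have := (isCompact_sphere (0 : ℂ) r₀).bddAbove_image hcont
    have heq : (Set.range fun ζ : Metric.sphere (0 : ℂ) r₀ => ‖f ζ‖)
        = (fun w => ‖f w‖) '' Metric.sphere (0 : ℂ) r₀ := by
      rw [show (fun ζ : Metric.sphere (0 : ℂ) r₀ => ‖f ζ‖)
          = (fun w => ‖f w‖) ∘ Subtype.val from rfl, Set.range_comp,
        Subtype.range_coe]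
    rwa [heq]
  have hMle : ∀ ζ : ℂ, ‖ζ‖ = r₀ → ‖f ζ‖ ≤ M := by
    intro ζ hζ
    have hmem : ζ ∈ Metric.sphere (0 : ℂ) r₀ := by
      simp [Complex.dist_eq, hζ]
    exact le_ciSup hbdd ⟨ζ, hmem⟩
  have hM0 : 0 ≤ M :=
    le_trans (norm_nonneg _)
      (hMle (r₀ : ℂ) (by rw [Complex.norm_real, Real.norm_eq_abs]; exact abs_of_pos hr₀))
  -- define the transferred function g on the unit disk
  set g : ℂ → ℂ := fun z => if z = 0 then 0 else f ((r₀ : ℂ) / z) with hg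
  have hg0 : g 0 = 0 := by simp [hg]
  -- basic absolute value computation
  have habs : ∀ z : ℂ, z ≠ 0 → ‖(r₀ : ℂ) / z‖ = r₀ / ‖z‖ := by
    intro z hz
    simp [norm_div, abs_of_pos hr₀]
  -- g z = f (r₀ / z) for z ≠ 0 tends to 0 at 0
  have htend : Tendsto g (nhdsWithin 0 {(0 : ℂ)}ᶜ) (nhds 0) := by
    have h1 : Tendsto (fun z : ℂ => (r₀ : ℂ) / z) (nhdsWithin 0 {(0 : ℂ)}ᶜ) (cobounded ℂ) := by
      rw [← tendsto_norm_atTop_iff_cobounded]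
      have h2 : Tendsto (fun z : ℂ => ‖z⁻¹‖) (nhdsWithin 0 {(0 : ℂ)}ᶜ) atTop :=
        tendsto_norm_atTop_iff_cobounded.2 tendsto_inv₀_nhdsNE_zero
      have h3 : Tendsto (fun z : ℂ => r₀ * ‖z⁻¹‖) (nhdsWithin 0 {(0 : ℂ)}ᶜ) atTop :=
        h2.const_mul_atTop hr₀
      refine h3.congr fun z => ?_
      simp [div_eq_mul_inv, norm_mul, abs_of_pos hr₀]
    have h4 : Tendsto (fun z : ℂ => f ((r₀ : ℂ) / z)) (nhdsWithin 0 {(0 : ℂ)}ᶜ) (nhds 0) :=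
      h0.comp h1
    refine h4.congr' ?_
    filter_upwards [self_mem_nhdsWithin] with z hz
    have hz' : z ≠ 0 := hz
    simp [hg, hz']
  -- g is differentiable on the open unit ball
  have hgd : DifferentiableOn ℂ g (Metric.ball (0 : ℂ) 1) := by
    rw [← Complex.differentiableOn_compl_singleton_and_continuousAt_iff
      (Metric.ball_mem_nhds (0 : ℂ) one_pos)]
    constructor
    · intro z hz
      obtain ⟨hzb, hz0⟩ := hz
      have hz0' : z ≠ 0 := by simpa using hz0
      have hzlt : ‖z‖ < 1 := by
        simpa [Complex.dist_eq] using hzb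
      have hmem : (r₀ : ℂ) / z ∈ {w : ℂ | r₀ < ‖w‖} := by
        rw [Set.mem_setOf_eq, habs z hz0']
        have hzpos : 0 < ‖z‖ := by
          simpa [norm_pos_iff] using hz0'
        rw [lt_div_iff₀ hzpos]
        nlinarith
      have hdiv : DifferentiableAt ℂ (fun z : ℂ => (r₀ : ℂ) / z) z :=
        (differentiableAt_const _).div differentiableAt_id hz0'
      have hfa : DifferentiableWithinAt ℂ (fun z : ℂ => f ((r₀ : ℂ) / z))
          (Metric.ball (0 : ℂ) 1 \ {0}) z := by
        refine (hf _ hmem).comp z hdiv.differentiableWithinAt ?_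
        intro y hy
        obtain ⟨hyb, hy0⟩ := hy
        have hy0' : y ≠ 0 := by simpa using hy0
        have hylt : ‖y‖ < 1 := by simpa [Complex.dist_eq] using hyb
        rw [Set.mem_setOf_eq, habs y hy0']
        have hypos : 0 < ‖y‖ := by
          simpa [norm_pos_iff] using hy0'
        rw [lt_div_iff₀ hypos]
        nlinarith
      refine hfa.congr ?_ ?_
      · intro y hy
        have : y ≠ 0 := by simpa using hy.2
        simp [hg, this]
      · simp [hg, hz0']
    · rw [← continuousWithinAt_compl_self]
      have h5 : Tendsto g (nhdsWithin 0 {(0 : ℂ)}ᶜ) (nhds (g 0)) := by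
        rw [hg0]; exact htend
      exact h5
  -- g is continuous on the closed unit ball
  have hgc : ContinuousOn g (Metric.closedBall (0 : ℂ) 1) := by
    intro z hz
    rcases eq_or_ne z 0 with rfl | hz0
    · have hct : ContinuousAt g 0 := by
        rw [← continuousWithinAt_compl_self]
        have h5 : Tendsto g (nhdsWithin 0 {(0 : ℂ)}ᶜ) (nhds (g 0)) := by
          rw [hg0]; exact htend
        exact h5
      exact hct.continuousWithinAt
    · have hsub : Metric.closedBall (0 : ℂ) 1 \ {0} ∈
          nhdsWithin z (Metric.closedBall (0 : ℂ) 1) := by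
        have : {(0 : ℂ)}ᶜ ∈ nhds z := isOpen_compl_singleton.mem_nhds (by simpa using hz0)
        have := inter_mem_nhdsWithin (Metric.closedBall (0 : ℂ) 1) this
        simpa [Set.diff_eq] using this
      have hcw : ContinuousWithinAt g (Metric.closedBall (0 : ℂ) 1 \ {0}) z := by
        have hdivc : ContinuousWithinAt (fun z : ℂ => (r₀ : ℂ) / z)
            (Metric.closedBall (0 : ℂ) 1 \ {0}) z :=
          (((continuous_const.continuousAt).div continuousAt_id hz0)).continuousWithinAt
        have hmaps : Set.MapsTo (fun z : ℂ => (r₀ : ℂ) / z)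
            (Metric.closedBall (0 : ℂ) 1 \ {0}) {w : ℂ | r₀ ≤ ‖w‖} := by
          intro y hy
          obtain ⟨hyb, hy0⟩ := hy
          have hy0' : y ≠ 0 := by simpa using hy0
          have hyle : ‖y‖ ≤ 1 := by simpa [Complex.dist_eq] using hyb
          rw [Set.mem_setOf_eq, habs y hy0']
          have hypos : 0 < ‖y‖ := by
            simpa [norm_pos_iff] using hy0'
          rw [le_div_iff₀ hypos]
          nlinarith
        have := (hc ((r₀ : ℂ) / z) (hmaps ⟨hz, by simpa using hz0⟩)).comp hdivc hmaps
        refine this.congr ?_ ?_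
        · intro y hy
          have : y ≠ 0 := by simpa using hy.2
          simp [hg, this]
        · simp [hg, hz0]
      exact hcw.mono_of_mem_nhdsWithin hsub
  -- maximum modulus: |g| ≤ M on the closed unit ball
  have hgle : ∀ z ∈ Metric.closedBall (0 : ℂ) 1, ‖g z‖ ≤ M := by
    intro z hz
    have hcl : z ∈ closure (Metric.ball (0 : ℂ) 1) := by
      rwa [closure_ball (0 : ℂ) one_ne_zero]
    refine Complex.norm_le_of_forall_mem_frontier_norm_le Metric.isBounded_ball
      ⟨hgd, hgc.mono ?_⟩ ?_ hcl
    · rw [closure_ball (0 : ℂ) one_ne_zero]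
    · intro ζ hζ
      rw [frontier_ball (0 : ℂ) one_ne_zero] at hζ
      have hζ1 : ‖ζ‖ = 1 := by simpa [Complex.dist_eq] using hζ
      have hζ0 : ζ ≠ 0 := by
        intro h; rw [h] at hζ1; simp at hζ1
      have : ‖(r₀ : ℂ) / ζ‖ = r₀ := by
        rw [habs ζ hζ0, hζ1, div_one]
      have := hMle _ this
      simpa [hg, hζ0] using this
  -- Schwarz lemma: |g z| ≤ M * |z| on the open unit ball
  have hschwarz : ∀ z ∈ Metric.ball (0 : ℂ) 1, ‖g z‖ ≤ M * ‖z‖ := by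
    intro z hz
    have key : ∀ ε : ℝ, 0 < ε → ‖g z‖ ≤ (M + ε) * ‖z‖ := by
      intro ε hε
      have hmaps : Set.MapsTo g (Metric.ball (0 : ℂ) 1) (Metric.ball (g 0) (M + ε)) := by
        intro y hy
        rw [hg0, Metric.mem_ball, Complex.dist_eq, sub_zero]
        exact lt_of_le_of_lt (hgle y (Metric.ball_subset_closedBall hy)) (by linarith)
      have := Complex.dist_le_div_mul_dist_of_mapsTo_ball hgd (hmaps.mono_right Metric.ball_subset_closedBall) hz
      rw [hg0] at this
      simpa [Complex.dist_eq, div_one] using this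
    by_contra hcon
    push_neg at hcon
    have hzpos : 0 < ‖z‖ := by
      rcases eq_or_ne z 0 with rfl | hz0
      · simp [hg0] at hcon
      · simpa [norm_pos_iff] using hz0
    set ε := (‖g z‖ - M * ‖z‖) / (2 * ‖z‖) with hε
    have hεpos : 0 < ε := by
      apply div_pos (by linarith) (by linarith)
    have := key ε hεpos
    rw [add_mul] at this
    have hεz : ε * ‖z‖ = (‖g z‖ - M * ‖z‖) / 2 := by
      rw [hε, div_mul_eq_mul_div, mul_div_mul_right _ _ hzpos.ne']
    rw [hεz] at this
    linarith
  -- conclude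
  intro w hw
  rcases eq_or_lt_of_le hw with heq | hlt
  · have : r₀ / ‖w‖ = 1 := by
      rw [← heq, div_self hr₀.ne']
    rw [this, one_mul]
    exact hMle w heq.symm
  · have hw0 : w ≠ 0 := by
      intro h; rw [h] at hlt; simp at hlt; linarith
    have hwpos : 0 < ‖w‖ := lt_trans hr₀ hlt
    set z : ℂ := (r₀ : ℂ) / w with hz
    have hz0 : z ≠ 0 := div_ne_zero (by exact_mod_cast hr₀.ne') hw0
    have hzabs : ‖z‖ = r₀ / ‖w‖ := by
      simp [hz, norm_div, abs_of_pos hr₀]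
    have hzball : z ∈ Metric.ball (0 : ℂ) 1 := by
      rw [Metric.mem_ball, Complex.dist_eq, sub_zero, hzabs]
      rw [div_lt_one hwpos]
      exact hlt
    have hgz : g z = f w := by
      have hr0c : (r₀ : ℂ) ≠ 0 := by exact_mod_cast hr₀.ne'
      have : (r₀ : ℂ) / z = w := by
        rw [hz, div_div_eq_mul_div, mul_comm, mul_div_assoc, div_self hr0c, mul_one]
      simp [hg, hz0, this]
    have := hschwarz z hzball
    rw [hgz, hzabs] at this
    calc ‖f w‖ ≤ M * (r₀ / ‖w‖) := this
      _ = (r₀ / ‖w‖) * M := mul_comm _ _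
end

section
/- Let 0 < r₀ < r₁, let h be holomorphic on the open annulus A(r₀,r₁) with |h(w)| ≤ M for all w ∈ A(r₀,r₁), and let h = h₀ + h₊ + h₋ be its Laurent splitting. Then |h₀| ≤ M, and for every w ∈ A(r₀,r₁): |h₊(w)| ≤ M·(|w|/r₁)/(1 − |w|/r₁) and |h₋(w)| ≤ M·(r₀/|w|)/(1 − r₀/|w|). -/
open Filter Bornology

set_option maxHeartbeats 1000000

open Metric Set
open scoped NNReal ENNReal

lemma hm_circleIntegral_zero {r₀ : ℝ} (hr₀ : 0 < r₀) {hm : ℂ → ℂ}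
    (hmd : DifferentiableOn ℂ hm {w : ℂ | r₀ < ‖w‖})
    (hml : Tendsto hm (cobounded ℂ) (nhds 0)) {s : ℝ} (hs : r₀ < s) (n : ℕ) :
    (∮ z in C(0, s), (z ^ (n + 1))⁻¹ • hm z) = 0 := by
  have hs0 : 0 < s := hr₀.trans hs
  have hopen : IsOpen {w : ℂ | r₀ < ‖w‖} :=
    isOpen_lt continuous_const continuous_norm
  set F : ℂ → ℂ := fun z => (z ^ (n + 1))⁻¹ • hm z with hF
  have habs : ∀ z : ℂ, r₀ < ‖z‖ → z ≠ 0 := by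
    intro z hz h0
    simp [h0] at hz; linarith
  have hFd : ∀ z : ℂ, r₀ < ‖z‖ → DifferentiableAt ℂ F z := by
    intro z hz
    have hz0 : z ≠ 0 := habs z hz
    have h1 : DifferentiableAt ℂ hm z := hmd.differentiableAt (hopen.mem_nhds hz)
    have h2 : DifferentiableAt ℂ (fun z : ℂ => (z ^ (n + 1))⁻¹) z :=
      (differentiableAt_pow _).inv (pow_ne_zero _ hz0)
    exact h2.smul h1
  -- the integral is independent of the radius
  have hkey : ∀ R : ℝ, s ≤ R → (∮ z in C(0, R), F z) = ∮ z in C(0, s), F z := by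
    intro R hR
    apply Complex.circleIntegral_eq_of_differentiable_on_annulus_off_countable hs0 hR countable_empty
    · intro z hz
      have hz' : r₀ < ‖z‖ := by
        have h1 : ¬ dist z 0 < s := by simpa [mem_ball] using hz.2
        rw [Complex.dist_eq, sub_zero] at h1
        linarith [le_of_not_gt h1]
      exact (hFd z hz').continuousAt.continuousWithinAt
    · intro z hz
      have hz' : r₀ < ‖z‖ := by
        have h1 : ¬ dist z 0 ≤ s := by simpa [mem_closedBall] using hz.1.2
        rw [Complex.dist_eq, sub_zero] at h1
        linarith [lt_of_not_ge h1]
      exact hFd z hz'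
  -- the integral tends to zero over large circles
  have hnorm : ∀ ε : ℝ, 0 < ε → ‖∮ z in C(0, s), F z‖ ≤ ε := by
    intro ε hε
    have hε' : 0 < ε / (2 * Real.pi) := by positivity
    have hmem : hm ⁻¹' Metric.ball 0 (ε / (2 * Real.pi)) ∈ cobounded ℂ :=
      hml (Metric.ball_mem_nhds 0 hε')
    rw [(Metric.hasBasis_cobounded_compl_closedBall (0 : ℂ)).mem_iff] at hmem
    obtain ⟨R₀, -, hR₀⟩ := hmem
    set R : ℝ := max s (max (R₀ + 1) 1) with hRdef
    have hsR : s ≤ R := le_max_left _ _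
    have hR1 : 1 ≤ R := le_trans (le_max_right _ _) (le_max_right _ _)
    have hR0 : 0 < R := lt_of_lt_of_le one_pos hR1
    have hRR₀ : R₀ < R := by
      have : R₀ + 1 ≤ R := le_trans (le_max_left _ _) (le_max_right _ _)
      linarith
    rw [← hkey R hsR]
    have hb : ∀ z ∈ sphere (0 : ℂ) R, ‖F z‖ ≤ R⁻¹ * (ε / (2 * Real.pi)) := by
      intro z hz
      have hzabs : ‖z‖ = R := by
        simpa [Complex.dist_eq, sub_zero] using (mem_sphere.mp hz)
      have hz0 : z ≠ 0 := by
        intro h0; rw [h0] at hzabs; simp at hzabs; linarith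
      have hzm : z ∈ (Metric.closedBall (0 : ℂ) R₀)ᶜ := by
        simp only [mem_compl_iff, Metric.mem_closedBall, Complex.dist_eq, sub_zero, not_le]
        rw [hzabs]; exact hRR₀
      have hhm : ‖hm z‖ ≤ ε / (2 * Real.pi) := by
        have := hR₀ hzm
        simp only [Set.mem_preimage, Metric.mem_ball, Complex.dist_eq, sub_zero] at this
        exact le_of_lt (by simpa using this)
      have h1 : ‖F z‖ = (‖z‖ ^ (n + 1))⁻¹ * ‖hm z‖ := by
        simp [hF, norm_smul, map_pow]
      rw [h1, hzabs]
      have h2 : (R ^ (n + 1) : ℝ)⁻¹ ≤ R⁻¹ := by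
        apply inv_anti₀ hR0
        calc R = R ^ 1 := (pow_one R).symm
        _ ≤ R ^ (n + 1) := pow_le_pow_right₀ hR1 (by omega)
      exact mul_le_mul h2 hhm (norm_nonneg _) (by positivity)
    have := circleIntegral.norm_integral_le_of_norm_le_const (le_of_lt hR0) hb
    calc ‖∮ z in C(0, R), F z‖ ≤ 2 * Real.pi * R * (R⁻¹ * (ε / (2 * Real.pi))) := this
    _ = ε := by
        field_simp
  have : ‖∮ z in C(0, s), F z‖ ≤ 0 := by
    by_contra hlt
    push_neg at hlt
    have := hnorm (‖∮ z in C(0, s), F z‖ / 2) (by linarith)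
    linarith
  simpa using le_antisymm this (norm_nonneg _)

lemma CircleIntegrable.sub'' {f g : ℂ → ℂ} {c : ℂ} {R : ℝ} (hf : CircleIntegrable f c R)
    (hg : CircleIntegrable g c R) : CircleIntegrable (fun z => f z - g z) c R :=
  IntervalIntegrable.sub hf hg

lemma laurent_key (r₀ r₁ : ℝ) (hr₀ : 0 < r₀) (hr : r₀ < r₁) (h : ℂ → ℂ)
    (hh : DifferentiableOn ℂ h {w : ℂ | r₀ < ‖w‖ ∧ ‖w‖ < r₁})
    (M : ℝ) (hM0 : 0 ≤ M)
    (hM : ∀ w : ℂ, r₀ < ‖w‖ → ‖w‖ < r₁ → ‖h w‖ ≤ M)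
    (h₀ : ℂ) (hp hm : ℂ → ℂ)
    (hpd : DifferentiableOn ℂ hp {w : ℂ | ‖w‖ < r₁}) (hp0 : hp 0 = 0)
    (hmd : DifferentiableOn ℂ hm {w : ℂ | r₀ < ‖w‖})
    (hml : Tendsto hm (cobounded ℂ) (nhds 0))
    (heq : ∀ w : ℂ, r₀ < ‖w‖ → ‖w‖ < r₁ → h w = h₀ + hp w + hm w) :
    ‖h₀‖ ≤ M ∧
    ∀ w : ℂ, r₀ < ‖w‖ → ‖w‖ < r₁ →
      ‖hp w‖ ≤ M * (‖w‖ / r₁) / (1 - ‖w‖ / r₁) := by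
  have hpi : (0:ℝ) < 2 * Real.pi := by positivity
  have sphere_abs : ∀ {s : ℝ}, 0 < s → ∀ z ∈ sphere (0:ℂ) s, ‖z‖ = s := by
    intro s hs0 z hz
    simpa [Complex.dist_eq, sub_zero] using (mem_sphere.mp hz)
  have sphere_ne : ∀ {s : ℝ}, 0 < s → ∀ z ∈ sphere (0:ℂ) s, z ≠ (0:ℂ) := by
    intro s hs0 z hz h0
    have := sphere_abs hs0 z hz
    rw [show z = 0 from h0] at this
    simp at this; linarith
  have hint : ∀ {s : ℝ}, r₀ < s → s < r₁ → ∀ (K : ℂ → ℂ),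
      ContinuousOn K (sphere (0:ℂ) s) →
        (CircleIntegrable (fun z => K z • h z) 0 s ∧
         CircleIntegrable (fun z => K z • h₀) 0 s ∧
         CircleIntegrable (fun z => K z • hp z) 0 s ∧
         CircleIntegrable (fun z => K z • hm z) 0 s) := by
    intro s hs1 hs2 K hK
    have hs0 : 0 < s := hr₀.trans hs1
    have hmem : ∀ z ∈ sphere (0:ℂ) s, r₀ < ‖z‖ ∧ ‖z‖ < r₁ := by
      intro z hz; rw [sphere_abs hs0 z hz]; exact ⟨hs1, hs2⟩
    have hsub1 : sphere (0:ℂ) s ⊆ {w : ℂ | r₀ < ‖w‖ ∧ ‖w‖ < r₁} :=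
      fun z hz => hmem z hz
    have hsub2 : sphere (0:ℂ) s ⊆ {w : ℂ | ‖w‖ < r₁} :=
      fun z hz => (hmem z hz).2
    have hsub3 : sphere (0:ℂ) s ⊆ {w : ℂ | r₀ < ‖w‖} :=
      fun z hz => (hmem z hz).1
    exact ⟨ContinuousOn.circleIntegrable hs0.le (hK.smul ((hh.continuousOn.mono hsub1))),
      ContinuousOn.circleIntegrable hs0.le (hK.smul continuousOn_const),
      ContinuousOn.circleIntegrable hs0.le (hK.smul ((hpd.continuousOn.mono hsub2))),
      ContinuousOn.circleIntegrable hs0.le (hK.smul ((hmd.continuousOn.mono hsub3)))⟩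
  -- the main pointwise computation: the Cauchy-type integral of `hp` against the kernel
  -- `(w/z)^k • z⁻¹` equals the one of `h`, for `k ≥ 1`; and similarly statements for `z⁻¹`
  constructor
  · -- bound on h₀
    set s : ℝ := (r₀ + r₁) / 2 with hsdef
    have hs1 : r₀ < s := by rw [hsdef]; linarith
    have hs2 : s < r₁ := by rw [hsdef]; linarith
    have hs0 : 0 < s := hr₀.trans hs1
    have hKcont : ContinuousOn (fun z : ℂ => z⁻¹) (sphere (0:ℂ) s) :=
      ContinuousOn.inv₀ continuousOn_id (sphere_ne hs0)
    obtain ⟨ih, ih0, ihp, ihm⟩ := hint hs1 hs2 (fun z => z⁻¹) hKcont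
    have hsplit : (∮ z in C(0, s), z⁻¹ • h₀) =
        (∮ z in C(0, s), z⁻¹ • h z) - (∮ z in C(0, s), z⁻¹ • hp z)
          - (∮ z in C(0, s), z⁻¹ • hm z) := by
      rw [← circleIntegral.integral_sub ih ihp, ← circleIntegral.integral_sub (ih.sub'' ihp) ihm]
      apply circleIntegral.integral_congr hs0.le
      intro z hz
      have habs := sphere_abs hs0 z hz
      have := heq z (by rw [habs]; exact hs1) (by rw [habs]; exact hs2)
      simp only [this, smul_eq_mul]
      ring
    have e1 : (∮ z in C(0, s), z⁻¹ • h₀) = (2 * Real.pi * Complex.I) • h₀ := by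
      rw [circleIntegral.integral_smul_const]
      congr 1
      have : (∮ z in C(0, s), (z - 0)⁻¹) = 2 * Real.pi * Complex.I :=
        circleIntegral.integral_sub_inv_of_mem_ball (by simpa using hs0)
      simpa using this
    have e2 : (∮ z in C(0, s), z⁻¹ • hp z) = 0 := by
      have hsub : closedBall (0:ℂ) s ⊆ {w : ℂ | ‖w‖ < r₁} := by
        intro z hz
        simp only [mem_closedBall, Complex.dist_eq, sub_zero] at hz
        exact lt_of_le_of_lt hz hs2
      have := (hpd.mono hsub).circleIntegral_sub_inv_smul (w := 0) (by simpa using hs0)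
      simp only [sub_zero] at this
      rw [this, hp0, smul_zero]
    have e3 : (∮ z in C(0, s), z⁻¹ • hm z) = 0 := by
      have := hm_circleIntegral_zero hr₀ hmd hml hs1 0
      simpa using this
    rw [e1, e2, e3, sub_zero, sub_zero] at hsplit
    have hbound : ‖∮ z in C(0, s), z⁻¹ • h z‖ ≤ 2 * Real.pi * s * (s⁻¹ * M) := by
      have := circleIntegral.norm_integral_le_of_norm_le_const (c := (0:ℂ))
        (f := fun z => z⁻¹ • h z) (C := s⁻¹ * M) hs0.le ?_
      · exact this
      · intro z hz
        have habs := sphere_abs hs0 z hz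
        have hM' := hM z (by rw [habs]; exact hs1) (by rw [habs]; exact hs2)
        rw [norm_smul, norm_inv]
        simp only [habs]
        exact mul_le_mul le_rfl hM' (norm_nonneg _) (by positivity)
    rw [← hsplit, norm_smul] at hbound
    have hnn : ‖(2 * Real.pi * Complex.I : ℂ)‖ = 2 * Real.pi := by
      simp [Complex.norm_def, Real.pi_nonneg]
    rw [hnn] at hbound
    have heqn : 2 * Real.pi * s * (s⁻¹ * M) = 2 * Real.pi * M := by
      field_simp
    rw [heqn] at hbound
    have := le_of_mul_le_mul_left hbound hpi
    simpa using this
  · -- bound on hp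
    intro w hw₀ hw₁
    set t : ℝ := ‖w‖ with htdef
    have ht0 : 0 < t := hr₀.trans hw₀
    have hbnd : ∀ s : ℝ, max t r₀ < s → s < r₁ →
        ‖hp w‖ ≤ M * (t / s) / (1 - t / s) := by
      intro s hs1 hs2
      have hts : t < s := lt_of_le_of_lt (le_max_left _ _) hs1
      have hr₀s : r₀ < s := lt_of_le_of_lt (le_max_right _ _) hs1
      have hs0 : 0 < s := hr₀.trans hr₀s
      set q : ℝ := t / s with hqdef
      have hq0 : 0 ≤ q := by positivity
      have hq1 : q < 1 := by rw [hqdef, div_lt_one hs0]; exact hts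
      -- power series of hp on closedBall 0 s
      have hsub : closedBall (0:ℂ) s ⊆ {w : ℂ | ‖w‖ < r₁} := by
        intro z hz
        simp only [mem_closedBall, Complex.dist_eq, sub_zero] at hz
        exact lt_of_le_of_lt hz hs2
      set S : ℝ≥0 := ⟨s, hs0.le⟩ with hSdef
      have hcoe : ((S : ℝ≥0) : ℝ) = s := rfl
      have hS0 : 0 < S := by rw [← NNReal.coe_lt_coe, hcoe]; exact hs0
      have hpd' : DifferentiableOn ℂ hp (closedBall (0:ℂ) (S:ℝ)) := by
        rw [hcoe]; exact hpd.mono hsub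
      have hps0 := DifferentiableOn.hasFPowerSeriesOnBall hpd' hS0
      have hps : HasFPowerSeriesOnBall hp (cauchyPowerSeries hp 0 s) 0 S := by
        rw [hcoe] at hps0; exact hps0
      have hsum : HasSum (fun n => cauchyPowerSeries hp 0 s n fun _ => w) (hp w) := by
        have hw : w ∈ Metric.eball (0:ℂ) S := by
          rw [Metric.emetric_ball_nnreal]
          simpa [mem_ball, Complex.dist_eq, hcoe, htdef] using hts
        simpa using hps.hasSum hw
      have hu0 : (cauchyPowerSeries hp 0 s 0 fun _ => w) = 0 := by
        have := hps.hasFPowerSeriesAt.coeff_zero fun _ => w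
        simpa [hp0] using this
      -- coefficient bounds
      have hcoef : ∀ k : ℕ, 1 ≤ k →
          ‖cauchyPowerSeries hp 0 s k fun _ => w‖ ≤ M * q ^ k := by
        intro k hk
        rw [cauchyPowerSeries_apply]
        have hKcont : ContinuousOn (fun z : ℂ => (w / z) ^ k • z⁻¹) (sphere (0:ℂ) s) := by
          refine ContinuousOn.smul (f := fun z : ℂ => (w / z) ^ k) (g := fun z : ℂ => z⁻¹) ?_ ?_
          · exact (ContinuousOn.div continuousOn_const continuousOn_id (sphere_ne hs0)).pow k
          · exact ContinuousOn.inv₀ continuousOn_id (sphere_ne hs0)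
        obtain ⟨ih, ih0, ihp, ihm⟩ := hint hr₀s hs2 (fun z => (w / z) ^ k • z⁻¹) hKcont
        simp only [smul_assoc] at ih ih0 ihp ihm
        have hsplit : (∮ z in C(0, s), (w / (z - 0)) ^ k • (z - 0)⁻¹ • hp z) =
            (∮ z in C(0, s), (w / z) ^ k • z⁻¹ • h z)
              - (∮ z in C(0, s), (w / z) ^ k • z⁻¹ • h₀)
              - (∮ z in C(0, s), (w / z) ^ k • z⁻¹ • hm z) := by
          rw [← circleIntegral.integral_sub ih ih0, ← circleIntegral.integral_sub (ih.sub'' ih0) ihm]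
          apply circleIntegral.integral_congr hs0.le
          intro z hz
          have habs := sphere_abs hs0 z hz
          have := heq z (by rw [habs]; exact hr₀s) (by rw [habs]; exact hs2)
          simp only [sub_zero, this, smul_eq_mul]
          ring
        have e0 : (∮ z in C(0, s), (w / z) ^ k • z⁻¹ • h₀) = 0 := by
          have hcongr : ∀ z ∈ sphere (0:ℂ) s,
              (w / z) ^ k • z⁻¹ • h₀ = (w ^ k * h₀) • (z - 0) ^ (-(k:ℤ) - 1) := by
            intro z hz
            have hz0 := sphere_ne hs0 z hz
            rw [sub_zero]
            have hzp : (z:ℂ) ^ (-(k:ℤ) - 1) = ((z ^ k)⁻¹ * z⁻¹) := by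
              rw [show (-(k:ℤ) - 1) = -((k:ℤ) + 1) by ring, zpow_neg]
              rw [show ((k:ℤ) + 1) = ((k + 1 : ℕ) : ℤ) by push_cast; ring, zpow_natCast]
              rw [pow_succ, mul_inv]
            rw [hzp]
            simp only [smul_eq_mul, div_pow]
            field_simp
          rw [circleIntegral.integral_congr hs0.le hcongr]
          rw [circleIntegral.integral_smul]
          rw [circleIntegral.integral_sub_zpow_of_ne (by omega) 0 0 s, smul_zero]
        have em : (∮ z in C(0, s), (w / z) ^ k • z⁻¹ • hm z) = 0 := by
          have hcongr : ∀ z ∈ sphere (0:ℂ) s,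
              (w / z) ^ k • z⁻¹ • hm z = w ^ k • (z ^ (k + 1))⁻¹ • hm z := by
            intro z hz
            have hz0 := sphere_ne hs0 z hz
            have hzk : (z : ℂ) ^ k ≠ 0 := pow_ne_zero _ hz0
            simp only [smul_eq_mul, div_pow, div_eq_mul_inv, pow_succ, mul_inv]
            ring
          rw [circleIntegral.integral_congr hs0.le hcongr, circleIntegral.integral_smul]
          rw [hm_circleIntegral_zero hr₀ hmd hml hr₀s k, smul_zero]
        calc ‖(2 * Real.pi * Complex.I : ℂ)⁻¹ •
              ∮ z in C(0, s), (w / (z - 0)) ^ k • (z - 0)⁻¹ • hp z‖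
            = ‖(2 * Real.pi * Complex.I : ℂ)⁻¹ •
              ∮ z in C(0, s), (w / z) ^ k • z⁻¹ • h z‖ := by
              rw [hsplit, e0, em, sub_zero, sub_zero]
          _ ≤ s * (q ^ k * (s⁻¹ * M)) := by
              apply circleIntegral.norm_two_pi_i_inv_smul_integral_le_of_norm_le_const hs0.le
              intro z hz
              have habs := sphere_abs hs0 z hz
              have hM' := hM z (by rw [habs]; exact hr₀s) (by rw [habs]; exact hs2)
              rw [norm_smul, norm_smul, norm_pow, norm_inv, norm_div]
              simp only [habs, ← htdef]
              rw [← hqdef]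
              exact mul_le_mul_of_nonneg_left
                (mul_le_mul_of_nonneg_left hM' (by positivity)) (by positivity)
          _ = M * q ^ k := by field_simp
      -- sum up
      have hsum' : HasSum (fun n => cauchyPowerSeries hp 0 s (n + 1) fun _ => w) (hp w) := by
        refine (hasSum_nat_add_iff (f := fun n => cauchyPowerSeries hp 0 s n fun _ => w) 1).mpr ?_
        have hz : (∑ i ∈ Finset.range 1, cauchyPowerSeries hp 0 s i fun _ => w) = 0 := by
          rw [Finset.sum_range_one, hu0]
        rw [hz, add_zero]
        exact hsum
      have hgeom : Summable (fun n : ℕ => M * q ^ (n + 1)) :=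
        ((summable_geometric_of_lt_one hq0 hq1).mul_left (M * q)).congr fun n => by ring
      have hsm : Summable (fun n => ‖cauchyPowerSeries hp 0 s (n + 1) fun _ => w‖) :=
        Summable.of_nonneg_of_le (fun n => norm_nonneg _)
          (fun n => hcoef (n + 1) (by omega)) hgeom
      have h1 : ‖hp w‖ ≤ ∑' n : ℕ, ‖cauchyPowerSeries hp 0 s (n + 1) fun _ => w‖ := by
        rw [show ‖hp w‖ = ‖hp w‖ from rfl, ← hsum'.tsum_eq]
        exact norm_tsum_le_tsum_norm hsm
      have h2 : (∑' n : ℕ, ‖cauchyPowerSeries hp 0 s (n + 1) fun _ => w‖)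
          ≤ ∑' n : ℕ, M * q ^ (n + 1) :=
        Summable.tsum_le_tsum (fun n => hcoef (n + 1) (by omega)) hsm hgeom
      have h3 : (∑' n : ℕ, M * q ^ (n + 1)) = M * q / (1 - q) := by
        have : (∑' n : ℕ, M * q ^ (n + 1)) = ∑' n : ℕ, (M * q) * q ^ n :=
          tsum_congr fun n => by ring
        rw [this, tsum_mul_left, tsum_geometric_of_lt_one hq0 hq1, div_eq_mul_inv]
      calc ‖hp w‖ ≤ ∑' n : ℕ, ‖cauchyPowerSeries hp 0 s (n + 1) fun _ => w‖ := h1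
        _ ≤ ∑' n : ℕ, M * q ^ (n + 1) := h2
        _ = M * (t / s) / (1 - t / s) := by rw [h3]
    -- pass to the limit s → r₁
    have hne : 1 - t / r₁ ≠ 0 := by
      have : t / r₁ < 1 := by rw [div_lt_one (hr₀.trans hr)]; exact hw₁
      linarith
    have hr₁0 : r₁ ≠ 0 := (hr₀.trans hr).ne'
    have hcont : ContinuousAt (fun s : ℝ => M * (t / s) / (1 - t / s)) r₁ := by
      apply ContinuousAt.div
      · exact continuousAt_const.mul (continuousAt_const.div continuousAt_id hr₁0)
      · exact continuousAt_const.sub (continuousAt_const.div continuousAt_id hr₁0)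
      · exact hne
    have hlim : Tendsto (fun s : ℝ => M * (t / s) / (1 - t / s)) (nhdsWithin r₁ (Iio r₁))
        (nhds (M * (t / r₁) / (1 - t / r₁))) :=
      (hcont.tendsto).mono_left nhdsWithin_le_nhds
    have hev : ∀ᶠ s in nhdsWithin r₁ (Iio r₁),
        ‖hp w‖ ≤ M * (t / s) / (1 - t / s) := by
      filter_upwards [Ioo_mem_nhdsLT_of_mem
        (⟨max_lt hw₁ hr, le_refl r₁⟩ : r₁ ∈ Ioc (max t r₀) r₁)] with s hs
      exact hbnd s hs.1 hs.2
    exact ge_of_tendsto hlim hev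

/-- `IsLaurentSplitting r₀ r₁ h h₀ hp hm` says that `h = h₀ + h₊ + h₋` on the annulus
`{r₀ < |w| < r₁}`, where `h₀` is a constant, `h₊` is holomorphic on the disk
`{|w| < r₁}` and vanishes at `0`, and `h₋` is holomorphic on `{|w| > r₀}` and tends
to `0` at infinity. -/
def IsLaurentSplitting (r₀ r₁ : ℝ) (h : ℂ → ℂ) (h₀ : ℂ) (hp hm : ℂ → ℂ) : Prop :=
  DifferentiableOn ℂ hp {w : ℂ | ‖w‖ < r₁} ∧ hp 0 = 0 ∧
  DifferentiableOn ℂ hm {w : ℂ | r₀ < ‖w‖} ∧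
  Tendsto hm (cobounded ℂ) (nhds 0) ∧
  ∀ w : ℂ, r₀ < ‖w‖ → ‖w‖ < r₁ → h w = h₀ + hp w + hm w

/-- Schwarz-lemma bounds for the pieces of the Laurent splitting of a bounded
holomorphic function on an annulus: `|h₀| ≤ M`, `|h₊(w)| ≤ M (|w|/r₁)/(1-|w|/r₁)`
and `|h₋(w)| ≤ M (r₀/|w|)/(1-r₀/|w|)` for `w` in the annulus. -/
theorem laurent_splitting_bounds (r₀ r₁ : ℝ) (hr₀ : 0 < r₀) (hr : r₀ < r₁)
    (h : ℂ → ℂ)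
    (hh : DifferentiableOn ℂ h {w : ℂ | r₀ < ‖w‖ ∧ ‖w‖ < r₁})
    (M : ℝ)
    (hM : ∀ w : ℂ, r₀ < ‖w‖ → ‖w‖ < r₁ → ‖h w‖ ≤ M)
    (h₀ : ℂ) (hp hm : ℂ → ℂ) (hsplit : IsLaurentSplitting r₀ r₁ h h₀ hp hm) :
    ‖h₀‖ ≤ M ∧
    ∀ w : ℂ, r₀ < ‖w‖ → ‖w‖ < r₁ →
      ‖hp w‖ ≤ M * (‖w‖ / r₁) / (1 - ‖w‖ / r₁) ∧
      ‖hm w‖ ≤ M * (r₀ / ‖w‖) / (1 - r₀ / ‖w‖) := by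
  obtain ⟨hpd, hp0, hmd, hml, heq⟩ := hsplit
  have hr₁0 : 0 < r₁ := hr₀.trans hr
  -- M is nonnegative
  have hM0 : 0 ≤ M := by
    have hmem1 : r₀ < ‖(((r₀ + r₁) / 2 : ℝ) : ℂ)‖ := by
      rw [Complex.norm_real, Real.norm_eq_abs, abs_of_pos (by linarith)]; linarith
    have hmem2 : ‖(((r₀ + r₁) / 2 : ℝ) : ℂ)‖ < r₁ := by
      rw [Complex.norm_real, Real.norm_eq_abs, abs_of_pos (by linarith)]; linarith
    exact le_trans (norm_nonneg _) (hM _ hmem1 hmem2)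
  have key1 := laurent_key r₀ r₁ hr₀ hr h hh M hM0 hM h₀ hp hm hpd hp0 hmd hml heq
  -- inverted configuration
  have hinv : ∀ u : ℂ, r₁⁻¹ < ‖u‖ → ‖u‖ < r₀⁻¹ →
      (u ≠ 0 ∧ r₀ < ‖u⁻¹‖ ∧ ‖u⁻¹‖ < r₁) := by
    intro u h1 h2
    have hu0 : u ≠ 0 := by
      intro h0; rw [h0] at h1; simp at h1
      exact absurd h1 (not_lt.mpr hr₁0.le)
    have habs : ‖u⁻¹‖ = (‖u‖)⁻¹ := norm_inv u
    have hau : 0 < ‖u‖ := lt_trans (inv_pos.mpr hr₁0) h1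
    constructor
    · exact hu0
    constructor
    · rw [habs, ← inv_inv r₀]
      exact inv_strictAnti₀ hau h2
    · rw [habs, ← inv_inv r₁]
      exact inv_strictAnti₀ (inv_pos.mpr hr₁0) h1
  set g : ℂ → ℂ := Function.update (fun u => hm u⁻¹) 0 0 with hgdef
  have hopen₀ : IsOpen {w : ℂ | r₀ < ‖w‖} :=
    isOpen_lt continuous_const continuous_norm
  have hopen₁ : IsOpen {w : ℂ | ‖w‖ < r₁} :=
    isOpen_lt continuous_norm continuous_const
  have hopenA : IsOpen {w : ℂ | r₀ < ‖w‖ ∧ ‖w‖ < r₁} := by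
    have : {w : ℂ | r₀ < ‖w‖ ∧ ‖w‖ < r₁} =
        {w : ℂ | r₀ < ‖w‖} ∩ {w : ℂ | ‖w‖ < r₁} := rfl
    rw [this]; exact hopen₀.inter hopen₁
  -- the limit of hm ∘ inv at 0
  have htend : Tendsto (fun u : ℂ => hm u⁻¹) (nhdsWithin 0 {0}ᶜ) (nhds 0) :=
    hml.comp tendsto_inv₀_nhdsNE_zero
  -- g is differentiable on the disk of radius r₀⁻¹
  have hgd : DifferentiableOn ℂ g {u : ℂ | ‖u‖ < r₀⁻¹} := by
    have hopen' : IsOpen {u : ℂ | ‖u‖ < r₀⁻¹} :=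
      isOpen_lt continuous_norm continuous_const
    have hc : {u : ℂ | ‖u‖ < r₀⁻¹} ∈ nhds (0:ℂ) :=
      hopen'.mem_nhds (by simp [inv_pos.mpr hr₀])
    have hd : DifferentiableOn ℂ (fun u : ℂ => hm u⁻¹)
        ({u : ℂ | ‖u‖ < r₀⁻¹} \ {0}) := by
      intro u hu
      have hu0 : u ≠ 0 := hu.2
      have habs : ‖u⁻¹‖ = (‖u‖)⁻¹ := norm_inv u
      have hmm : r₀ < ‖u⁻¹‖ := by
        rw [habs, ← inv_inv r₀]
        apply inv_strictAnti₀ _ hu.1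
        simpa [norm_pos_iff] using hu0
      have h1 : DifferentiableAt ℂ hm u⁻¹ := hmd.differentiableAt (hopen₀.mem_nhds hmm)
      exact (h1.comp u (differentiableAt_inv hu0)).differentiableWithinAt
    have hb : Filter.IsBoundedUnder (· ≤ ·) (nhdsWithin (0:ℂ) {0}ᶜ)
        (norm ∘ fun u : ℂ => hm u⁻¹ - hm 0⁻¹) :=
      ((htend.sub tendsto_const_nhds).norm.isBoundedUnder_le)
    have := Complex.differentiableOn_update_limUnder_of_isLittleO hc hd
      (hb.isLittleO_sub_self_inv)
    rwa [htend.limUnder_eq] at this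
  -- remaining splitting data for the inverted annulus
  have hg0 : g 0 = 0 := Function.update_self 0 0 _
  have hHd : DifferentiableOn ℂ (fun u : ℂ => h u⁻¹)
      {u : ℂ | r₁⁻¹ < ‖u‖ ∧ ‖u‖ < r₀⁻¹} := by
    intro u hu
    obtain ⟨hu0, hm1, hm2⟩ := hinv u hu.1 hu.2
    have h1 : DifferentiableAt ℂ h u⁻¹ := hh.differentiableAt (hopenA.mem_nhds ⟨hm1, hm2⟩)
    exact (h1.comp u (differentiableAt_inv hu0)).differentiableWithinAt
  have hHm : DifferentiableOn ℂ (fun u : ℂ => hp u⁻¹) {u : ℂ | r₁⁻¹ < ‖u‖} := by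
    intro u hu
    have hu0 : u ≠ 0 := by
      intro h0; rw [h0] at hu; simp only [Set.mem_setOf_eq, map_zero, norm_zero] at hu
      exact absurd hu (not_lt.mpr (inv_pos.mpr hr₁0).le)
    have habs : ‖u⁻¹‖ = (‖u‖)⁻¹ := norm_inv u
    have hmm : ‖u⁻¹‖ < r₁ := by
      rw [habs, ← inv_inv r₁]
      exact inv_strictAnti₀ (inv_pos.mpr hr₁0) hu
    have h1 : DifferentiableAt ℂ hp u⁻¹ := hpd.differentiableAt (hopen₁.mem_nhds hmm)
    exact (h1.comp u (differentiableAt_inv hu0)).differentiableWithinAt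
  have hHml : Tendsto (fun u : ℂ => hp u⁻¹) (cobounded ℂ) (nhds 0) := by
    have hc : ContinuousAt hp 0 := by
      have : DifferentiableAt ℂ hp 0 :=
        hpd.differentiableAt (hopen₁.mem_nhds (by simp [hr₁0]))
      exact this.continuousAt
    have : Tendsto hp (nhds 0) (nhds 0) := by
      have := hc.tendsto; rwa [hp0] at this
    exact this.comp tendsto_inv₀_cobounded
  have hHeq : ∀ u : ℂ, r₁⁻¹ < ‖u‖ → ‖u‖ < r₀⁻¹ →
      h u⁻¹ = h₀ + g u + hp u⁻¹ := by
    intro u h1 h2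
    obtain ⟨hu0, hm1, hm2⟩ := hinv u h1 h2
    have hgu : g u = hm u⁻¹ := Function.update_of_ne hu0 0 _
    rw [hgu, heq u⁻¹ hm1 hm2]
    ring
  have hHM : ∀ u : ℂ, r₁⁻¹ < ‖u‖ → ‖u‖ < r₀⁻¹ →
      ‖h u⁻¹‖ ≤ M := by
    intro u h1 h2
    obtain ⟨hu0, hm1, hm2⟩ := hinv u h1 h2
    exact hM u⁻¹ hm1 hm2
  have key2 := laurent_key r₁⁻¹ r₀⁻¹ (inv_pos.mpr hr₁0)
    (inv_strictAnti₀ hr₀ hr)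
    (fun u => h u⁻¹) hHd M hM0 hHM h₀ g (fun u => hp u⁻¹) hgd hg0 hHm hHml hHeq
  refine ⟨key1.1, fun w hw₀ hw₁ => ⟨key1.2 w hw₀ hw₁, ?_⟩⟩
  -- the bound on hm from the inverted configuration
  have hw0 : w ≠ 0 := by
    intro h0; rw [h0] at hw₀; simp at hw₀; linarith
  have haw : 0 < ‖w‖ := by simpa [norm_pos_iff] using hw0
  have habs : ‖w⁻¹‖ = (‖w‖)⁻¹ := norm_inv w
  have h1 : r₁⁻¹ < ‖w⁻¹‖ := by
    rw [habs]; exact inv_strictAnti₀ haw hw₁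
  have h2 : ‖w⁻¹‖ < r₀⁻¹ := by
    rw [habs]; exact inv_strictAnti₀ hr₀ hw₀
  have := key2.2 w⁻¹ h1 h2
  have hgw : g w⁻¹ = hm w := by
    rw [hgdef, Function.update_of_ne (inv_ne_zero hw0), inv_inv]
  rw [hgw, habs] at this
  have hrw : (‖w‖)⁻¹ / r₀⁻¹ = r₀ / ‖w‖ := by
    field_simp
  rwa [hrw] at this
end

section
/- Let g(r) = ∫₀^r (4 − 9t⁴)^{1/2} dt and define Φ(r,θ) = π^{3/2}·(g(r), r³ cos θ, r³ sin θ) ∈ ℝ³ for 0 < r < (2/3)^{1/2} and θ ∈ ℝ. Then Φ is differentiable and for every such (r,θ) and every (a,b) ∈ ℝ²: ‖DΦ(r,θ)(a,b)‖² = π³(4a² + r⁶b²). In particular Φ realizes the model metric π³(4 dr² + r⁶ dθ²) as a surface of revolution in Euclidean ℝ³. -/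
open Real

/-- Profile function `g(r) = ∫₀^r √(4 - 9t⁴) dt` of the model surface of revolution. -/
noncomputable def modelProfile (r : ℝ) : ℝ := ∫ t in (0 : ℝ)..r, Real.sqrt (4 - 9 * t ^ 4)

/-- The surface-of-revolution map
`Φ(r,θ) = π^{3/2} (g(r), r³ cos θ, r³ sin θ) ∈ ℝ³`. -/
noncomputable def modelSurface (p : ℝ × ℝ) : EuclideanSpace ℝ (Fin 3) :=
  (WithLp.equiv 2 (Fin 3 → ℝ)).symm
    ![Real.pi ^ ((3 : ℝ) / 2) * modelProfile p.1,
      Real.pi ^ ((3 : ℝ) / 2) * p.1 ^ 3 * Real.cos p.2,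
      Real.pi ^ ((3 : ℝ) / 2) * p.1 ^ 3 * Real.sin p.2]

set_option maxHeartbeats 1000000 in
/-- For `0 < r < (2/3)^{1/2}` the map `Φ` is differentiable and its differential
satisfies `‖DΦ(r,θ)(a,b)‖² = π³(4a² + r⁶b²)`: `Φ` realizes the model metric
`π³(4dr² + r⁶dθ²)` as a surface of revolution in Euclidean `ℝ³`. -/
theorem modelSurface_realizes_model_metric (r θ : ℝ) (hr : 0 < r)
    (hr' : r < Real.sqrt (2 / 3)) :
    DifferentiableAt ℝ modelSurface (r, θ) ∧
    ∀ a b : ℝ,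
      ‖fderiv ℝ modelSurface (r, θ) (a, b)‖ ^ 2
        = Real.pi ^ 3 * (4 * a ^ 2 + r ^ 6 * b ^ 2) := by
  set c : ℝ := Real.pi ^ ((3 : ℝ) / 2) with hc
  set s : ℝ := Real.sqrt (4 - 9 * r ^ 4) with hs
  set fst' : ℝ × ℝ →L[ℝ] ℝ := ContinuousLinearMap.fst ℝ ℝ ℝ
  set snd' : ℝ × ℝ →L[ℝ] ℝ := ContinuousLinearMap.snd ℝ ℝ ℝ
  set D0 : ℝ × ℝ →L[ℝ] ℝ := (c * s) • fst' with hD0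
  set D1 : ℝ × ℝ →L[ℝ] ℝ :=
    (c * (3 * r ^ 2) * Real.cos θ) • fst' + (-(c * r ^ 3 * Real.sin θ)) • snd' with hD1
  set D2 : ℝ × ℝ →L[ℝ] ℝ :=
    (c * (3 * r ^ 2) * Real.sin θ) • fst' + (c * r ^ 3 * Real.cos θ) • snd' with hD2
  have hcont : Continuous fun t : ℝ => Real.sqrt (4 - 9 * t ^ 4) := by
    continuity
  have hg : HasDerivAt modelProfile s r := by
    unfold modelProfile
    exact intervalIntegral.integral_hasDerivAt_right
      (hcont.intervalIntegrable _ _)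
      (hcont.stronglyMeasurableAtFilter _ _) hcont.continuousAt
  have h0 : HasFDerivAt (fun p : ℝ × ℝ => c * modelProfile p.1) D0 (r, θ) := by
    have := ((hg.const_mul c).hasFDerivAt).comp (r, θ) (hasFDerivAt_fst (𝕜 := ℝ) (p := (r, θ)))
    refine this.congr_fderiv ?_
    refine ContinuousLinearMap.ext fun p => ?_
    simp [hD0, fst']
    ring
  have hr3 : HasFDerivAt (fun p : ℝ × ℝ => c * p.1 ^ 3)
      ((c * (3 * r ^ 2)) • fst') (r, θ) := by
    have := (((hasDerivAt_pow 3 r).const_mul c).hasFDerivAt).comp (r, θ) (hasFDerivAt_fst (𝕜 := ℝ) (p := (r, θ)))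
    refine this.congr_fderiv ?_
    refine ContinuousLinearMap.ext fun p => ?_
    simp [fst']
    ring
  have hcos : HasFDerivAt (fun p : ℝ × ℝ => Real.cos p.2)
      ((-Real.sin θ) • snd') (r, θ) := by
    have := ((Real.hasDerivAt_cos θ).hasFDerivAt).comp (r, θ) (hasFDerivAt_snd (𝕜 := ℝ) (p := (r, θ)))
    refine this.congr_fderiv ?_
    refine ContinuousLinearMap.ext fun p => ?_
    simp [snd']
    ring
  have hsin : HasFDerivAt (fun p : ℝ × ℝ => Real.sin p.2)
      ((Real.cos θ) • snd') (r, θ) := by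
    have := ((Real.hasDerivAt_sin θ).hasFDerivAt).comp (r, θ) (hasFDerivAt_snd (𝕜 := ℝ) (p := (r, θ)))
    refine this.congr_fderiv ?_
    refine ContinuousLinearMap.ext fun p => ?_
    simp [snd']
    ring
  have h1 : HasFDerivAt (fun p : ℝ × ℝ => c * p.1 ^ 3 * Real.cos p.2) D1 (r, θ) := by
    have := hr3.mul hcos
    refine this.congr_fderiv ?_
    refine ContinuousLinearMap.ext fun p => ?_
    simp [hD1, fst', snd']
    ring
  have h2 : HasFDerivAt (fun p : ℝ × ℝ => c * p.1 ^ 3 * Real.sin p.2) D2 (r, θ) := by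
    have := hr3.mul hsin
    refine this.congr_fderiv ?_
    refine ContinuousLinearMap.ext fun p => ?_
    simp [hD2, fst', snd']
    ring
  have hF : HasFDerivAt modelSurface
      (((EuclideanSpace.equiv (Fin 3) ℝ).symm.toContinuousLinearMap).comp
        (ContinuousLinearMap.pi ![D0, D1, D2])) (r, θ) := by
    refine HasFDerivAt.comp (r, θ)
      ((EuclideanSpace.equiv (Fin 3) ℝ).symm.toContinuousLinearMap.hasFDerivAt) ?_
    refine hasFDerivAt_pi.2 ?_
    intro i
    fin_cases i
    · simpa using h0
    · simpa using h1
    · simpa using h2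
  refine ⟨hF.differentiableAt, fun a b => ?_⟩
  rw [hF.fderiv]
  have hval : ∀ x : EuclideanSpace ℝ (Fin 3), ‖x‖ ^ 2 = ∑ i, x i ^ 2 := by
    intro x
    rw [EuclideanSpace.norm_eq]
    rw [Real.sq_sqrt (by positivity)]
    simp [sq]
  rw [hval]
  have h23 : r ^ 2 < 2 / 3 := by
    have := (Real.lt_sqrt hr.le).mp hr'
    simpa [sq] using this
  have hs2 : s ^ 2 = 4 - 9 * r ^ 4 := by
    rw [hs, Real.sq_sqrt (by nlinarith)]
  have hc2 : c ^ 2 = Real.pi ^ 3 := by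
    rw [hc, ← Real.rpow_natCast (Real.pi ^ ((3:ℝ)/2)) 2, ← Real.rpow_mul Real.pi_pos.le,
      ← Real.rpow_natCast Real.pi 3]
    norm_num
  have hpyth := Real.sin_sq_add_cos_sq θ
  simp [Fin.sum_univ_three, hD0, hD1, hD2, fst', snd']
  linear_combination (c ^ 2 * a ^ 2) * hs2 + (9 * c ^ 2 * r ^ 4 * a ^ 2 + c ^ 2 * r ^ 6 * b ^ 2) * hpyth
    + (4 * a ^ 2 + r ^ 6 * b ^ 2) * hc2
end

section
/- There exists a universal constant c > 0 with the following property: if u is a C² function on ℍ with u ≥ 0 and satisfying the eigenfunction equation y²(∂²u/∂x² + ∂²u/∂y²) = 2u at every point of ℍ, then for every z₀ ∈ ℍ: u(z₀) ≤ c · ∫_{B(z₀,1)} u dA, where B(z₀,1) = {z ∈ ℍ : d(z,z₀) < 1} is the hyperbolic unit ball and dA = y⁻² dx dy is the hyperbolic area element. -/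
set_option maxHeartbeats 1000000

section MVIAux

open Complex MeasureTheory Metric Real intervalIntegral

noncomputable abbrev MVI_E (θ : ℝ) : ℂ := Complex.exp (θ * I)

lemma MVI_E_norm (θ : ℝ) : ‖MVI_E θ‖ = 1 := by
  simp [MVI_E, Complex.norm_exp_ofReal_mul_I]

lemma MVI_E_deriv (θ : ℝ) : HasDerivAt MVI_E (MVI_E θ * I) θ := by
  have h1 : HasDerivAt (fun θ : ℝ => (↑θ * I : ℂ)) I θ := by
    simpa using (Complex.ofRealCLM.hasDerivAt (x := θ)).mul_const I
  simpa [MVI_E] using h1.cexp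

lemma MVI_E_pi : MVI_E π = -1 := by simp [MVI_E, Complex.exp_pi_mul_I]

lemma MVI_E_neg_pi : MVI_E (-π) = -1 := by
  simp only [MVI_E]
  push_cast
  rw [neg_mul, Complex.exp_neg, Complex.exp_pi_mul_I]
  norm_num

lemma MVI_rot (Q' : ℂ →L[ℝ] ℂ →L[ℝ] ℝ) (c s : ℝ) (hcs : c^2 + s^2 = 1) :
    Q' (c•(1:ℂ) + s•I) (c•(1:ℂ) + s•I) + Q' ((-s)•(1:ℂ) + c•I) ((-s)•(1:ℂ) + c•I)
      = Q' 1 1 + Q' I I := by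
  simp only [map_add, ContinuousLinearMap.map_smul, ContinuousLinearMap.add_apply,
    ContinuousLinearMap.coe_smul', Pi.smul_apply, smul_eq_mul, _root_.map_smul]
  linear_combination (Q' 1 1 + Q' I I) * hcs

lemma MVI_E_eq (θ : ℝ) : MVI_E θ = (Real.cos θ) • (1:ℂ) + (Real.sin θ) • I := by
  rw [MVI_E, Complex.exp_mul_I]
  simp [Complex.real_smul]

lemma MVI_IE_eq (θ : ℝ) : MVI_E θ * I = (-Real.sin θ) • (1:ℂ) + (Real.cos θ) • I := by
  rw [MVI_E, Complex.exp_mul_I]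
  push_cast
  simp only [Complex.real_smul, smul_eq_mul]
  push_cast
  linear_combination (Complex.sin θ) * Complex.I_sq

lemma MVI_submean (u : ℂ → ℝ) (V : Set ℂ) (hV : IsOpen V) (hu : ContDiffOn ℝ 2 u V)
    (hΔ : ∀ z ∈ V, 0 ≤ fderiv ℝ (fun w => fderiv ℝ u w) z 1 1
        + fderiv ℝ (fun w => fderiv ℝ u w) z I I)
    (z₀ : ℂ) (ρ ρ' : ℝ) (hρ : 0 < ρ) (hρρ' : ρ < ρ')
    (hsub : Metric.closedBall z₀ ρ' ⊆ V) :
    Real.pi * ρ ^ 2 * u z₀ ≤ ∫ z in Metric.ball z₀ ρ, u z := by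
  set Fd : ℂ → (ℂ →L[ℝ] ℝ) := fun z => fderiv ℝ u z with hF_def
  set Qd : ℂ → (ℂ →L[ℝ] (ℂ →L[ℝ] ℝ)) := fun z => fderiv ℝ (fun w => fderiv ℝ u w) z with hQ_def
  set p : ℝ → ℝ → ℂ := fun r θ => z₀ + ↑r * MVI_E θ with hp_def
  have hρ'pos : 0 < ρ' := hρ.trans hρρ'
  -- membership
  have hmem : ∀ r θ : ℝ, |r| ≤ ρ' → p r θ ∈ Metric.closedBall z₀ ρ' := by
    intro r θ hr
    simp only [hp_def, Metric.mem_closedBall, dist_eq_norm, add_sub_cancel_left]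
    rw [norm_mul, MVI_E_norm, mul_one, Complex.norm_real, Real.norm_eq_abs]
    exact hr
  have hmemV : ∀ r θ : ℝ, |r| ≤ ρ' → p r θ ∈ V := fun r θ hr => hsub (hmem r θ hr)
  -- derivative facts
  have hFd : ∀ z ∈ V, HasFDerivAt u (Fd z) z := fun z hz =>
    (((hu.differentiableOn (by norm_num)) z hz).differentiableAt (hV.mem_nhds hz)).hasFDerivAt
  have hF1 : ContDiffOn ℝ 1 (fun w => fderiv ℝ u w) V := hu.fderiv_of_isOpen hV (by norm_num)
  have hQd : ∀ z ∈ V, HasFDerivAt (fun w => fderiv ℝ u w) (Qd z) z := fun z hz =>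
    (((hF1.differentiableOn (by norm_num)) z hz).differentiableAt (hV.mem_nhds hz)).hasFDerivAt
  have hFc : ContinuousOn Fd V := hu.continuousOn_fderiv_of_isOpen hV (by norm_num)
  have hQc : ContinuousOn Qd V := hF1.continuousOn_fderiv_of_isOpen hV le_rfl
  -- bounds on the compact ball
  obtain ⟨M₁, hM₁⟩ := (isCompact_closedBall z₀ ρ').exists_bound_of_continuousOn (f := Fd)
    (hFc.mono hsub)
  obtain ⟨M₂, hM₂⟩ := (isCompact_closedBall z₀ ρ').exists_bound_of_continuousOn (f := Qd)
    (hQc.mono hsub)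
  -- continuity of p
  have hpc : Continuous (fun q : ℝ × ℝ => p q.1 q.2) := by
    apply continuous_const.add
    exact (Complex.continuous_ofReal.comp continuous_fst).mul
      (Complex.continuous_exp.comp ((Complex.continuous_ofReal.comp continuous_snd).mul
        continuous_const))
  have hpcθ : ∀ r : ℝ, Continuous (fun θ => p r θ) :=
    fun r => hpc.comp (Continuous.prodMk_right r)
  have hprd : ∀ (r θ : ℝ), HasDerivAt (fun r : ℝ => p r θ) (MVI_E θ) r := by
    intro r θ
    simpa [hp_def] using ((Complex.ofRealCLM.hasDerivAt (x := r)).mul_const (MVI_E θ)).const_add z₀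
  have hpθd : ∀ (r θ : ℝ), HasDerivAt (fun θ : ℝ => p r θ) (↑r * (MVI_E θ * I)) θ := by
    intro r θ
    exact ((MVI_E_deriv θ).const_mul (↑r : ℂ)).const_add z₀
  -- continuity of integrands
  have contu : ∀ r : ℝ, |r| ≤ ρ' → Continuous (fun θ => u (p r θ)) := by
    intro r hr
    exact (hu.continuousOn.mono hsub).comp_continuous (hpcθ r) (fun θ => hmem r θ hr)
  have contF : ∀ r : ℝ, |r| ≤ ρ' → Continuous (fun θ => Fd (p r θ) (MVI_E θ)) := by
    intro r hr
    exact ((hFc.mono hsub).comp_continuous (hpcθ r) (fun θ => hmem r θ hr)).clm_apply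
      (Complex.continuous_exp.comp (Complex.continuous_ofReal.mul continuous_const))
  have contQ : ∀ r : ℝ, |r| ≤ ρ' → Continuous (fun θ => Qd (p r θ) (MVI_E θ) (MVI_E θ)) := by
    intro r hr
    have hE : Continuous MVI_E :=
      Complex.continuous_exp.comp (Complex.continuous_ofReal.mul continuous_const)
    exact (((hQc.mono hsub).comp_continuous (hpcθ r) (fun θ => hmem r θ hr)).clm_apply
      hE).clm_apply hE
  set A : ℝ → ℝ := fun r => ∫ θ in (-π)..π, u (p r θ) with hA_def
  set B : ℝ → ℝ := fun r => ∫ θ in (-π)..π, Fd (p r θ) (MVI_E θ) with hB_def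
  set C : ℝ → ℝ := fun r => ∫ θ in (-π)..π, Qd (p r θ) (MVI_E θ) (MVI_E θ) with hC_def
  set ε : ℝ := ρ' - ρ with hε_def
  have hεpos : 0 < ε := by simp [hε_def]; linarith
  have habs : ∀ r₀ : ℝ, r₀ ∈ Set.Icc 0 ρ → ∀ x ∈ Metric.ball r₀ ε, |x| ≤ ρ' := by
    intro r₀ hr₀ x hx
    rw [Metric.mem_ball, Real.dist_eq] at hx
    rw [abs_le]
    cases' abs_lt.1 hx with h1 h2
    constructor <;> [skip; skip] <;> cases' hr₀ with h3 h4 <;> linarith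
  -- A' = B
  have keyA : ∀ r₀ ∈ Set.Icc (0:ℝ) ρ, HasDerivAt A (B r₀) r₀ := by
    intro r₀ hr₀
    have habs₀ : |r₀| ≤ ρ' := habs r₀ hr₀ r₀ (Metric.mem_ball_self hεpos)
    rw [hA_def, hB_def]
    refine (intervalIntegral.hasDerivAt_integral_of_dominated_loc_of_deriv_le
      (F := fun r θ => u (p r θ)) (F' := fun r θ => Fd (p r θ) (MVI_E θ)) (Metric.ball_mem_nhds r₀ hεpos)
      ?_ ((contu r₀ habs₀).intervalIntegrable _ _) ((contF r₀ habs₀).aestronglyMeasurable)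
      (bound := fun _ => M₁) ?_ (intervalIntegrable_const) ?_).2
    · filter_upwards [Metric.ball_mem_nhds r₀ hεpos] with x hx
      exact (contu x (habs r₀ hr₀ x hx)).aestronglyMeasurable
    · refine ae_of_all _ fun θ _ x hx => ?_
      calc ‖Fd (p x θ) (MVI_E θ)‖ ≤ ‖Fd (p x θ)‖ * ‖MVI_E θ‖ := (Fd (p x θ)).le_opNorm _
        _ ≤ M₁ := by rw [MVI_E_norm, mul_one]; exact hM₁ _ (hmem x θ (habs r₀ hr₀ x hx))
    · refine ae_of_all _ fun θ _ x hx => ?_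
      exact (hFd _ (hmemV x θ (habs r₀ hr₀ x hx))).comp_hasDerivAt x (hprd x θ)
  -- B' = C
  have keyB : ∀ r₀ ∈ Set.Icc (0:ℝ) ρ, HasDerivAt B (C r₀) r₀ := by
    intro r₀ hr₀
    have habs₀ : |r₀| ≤ ρ' := habs r₀ hr₀ r₀ (Metric.mem_ball_self hεpos)
    rw [hB_def, hC_def]
    refine (intervalIntegral.hasDerivAt_integral_of_dominated_loc_of_deriv_le
      (F := fun r θ => Fd (p r θ) (MVI_E θ))
      (F' := fun r θ => Qd (p r θ) (MVI_E θ) (MVI_E θ)) (Metric.ball_mem_nhds r₀ hεpos)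
      ?_ ((contF r₀ habs₀).intervalIntegrable _ _) ((contQ r₀ habs₀).aestronglyMeasurable)
      (bound := fun _ => M₂) ?_ (intervalIntegrable_const) ?_).2
    · filter_upwards [Metric.ball_mem_nhds r₀ hεpos] with x hx
      exact (contF x (habs r₀ hr₀ x hx)).aestronglyMeasurable
    · refine ae_of_all _ fun θ _ x hx => ?_
      calc ‖Qd (p x θ) (MVI_E θ) (MVI_E θ)‖
          ≤ ‖Qd (p x θ) (MVI_E θ)‖ * ‖MVI_E θ‖ := (Qd (p x θ) (MVI_E θ)).le_opNorm _
        _ ≤ ‖Qd (p x θ)‖ * ‖MVI_E θ‖ * ‖MVI_E θ‖ := by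
            gcongr
            exact (Qd (p x θ)).le_opNorm _
        _ ≤ M₂ := by
            rw [MVI_E_norm, mul_one, mul_one]
            exact hM₂ _ (hmem x θ (habs r₀ hr₀ x hx))
    · refine ae_of_all _ fun θ _ x hx => ?_
      have h1 : HasDerivAt (fun r : ℝ => Fd (p r θ)) (Qd (p x θ) (MVI_E θ)) x :=
        (hQd _ (hmemV x θ (habs r₀ hr₀ x hx))).comp_hasDerivAt x (hprd x θ)
      simpa using h1.clm_apply (hasDerivAt_const x (MVI_E θ))
  have hE : Continuous MVI_E :=
    Complex.continuous_exp.comp (Complex.continuous_ofReal.mul continuous_const)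
  -- key inequality : 0 ≤ B r + r * C r for 0 < r ≤ ρ
  have hBC : ∀ r : ℝ, 0 < r → r ≤ ρ → 0 ≤ B r + r * C r := by
    intro r hr0 hrρ
    have habsr : |r| ≤ ρ' := by rw [abs_of_pos hr0]; linarith
    set g : ℝ → ℝ := fun θ => Qd (p r θ) (↑r * (MVI_E θ * I)) (↑r * (MVI_E θ * I))
      + Fd (p r θ) (↑r * (MVI_E θ * I * I)) with hg_def
    have hder : ∀ θ ∈ Set.uIcc (-π) π,
        HasDerivAt (fun θ => Fd (p r θ) (↑r * (MVI_E θ * I))) (g θ) θ := by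
      intro θ _
      have hc : HasDerivAt (fun θ : ℝ => Fd (p r θ)) (Qd (p r θ) (↑r * (MVI_E θ * I))) θ :=
        (hQd _ (hmemV r θ habsr)).comp_hasDerivAt θ (hpθd r θ)
      have hf : HasDerivAt (fun θ : ℝ => (↑r * (MVI_E θ * I) : ℂ)) (↑r * (MVI_E θ * I * I)) θ :=
        ((MVI_E_deriv θ).mul_const I).const_mul (↑r : ℂ)
      exact hc.clm_apply hf
    have gcont : Continuous g := by
      rw [hg_def]
      have h1 : Continuous (fun θ => Qd (p r θ)) :=
        (hQc.mono hsub).comp_continuous (hpcθ r) (fun θ => hmem r θ habsr)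
      have h2 : Continuous (fun θ : ℝ => (↑r * (MVI_E θ * I) : ℂ)) :=
        continuous_const.mul (hE.mul continuous_const)
      have h3 : Continuous (fun θ : ℝ => (↑r * (MVI_E θ * I * I) : ℂ)) :=
        continuous_const.mul ((hE.mul continuous_const).mul continuous_const)
      have h4 : Continuous (fun θ => Fd (p r θ)) :=
        (hFc.mono hsub).comp_continuous (hpcθ r) (fun θ => hmem r θ habsr)
      exact ((h1.clm_apply h2).clm_apply h2).add (h4.clm_apply h3)
    have hg0 : ∫ θ in (-π)..π, g θ = 0 := by
      rw [intervalIntegral.integral_eq_sub_of_hasDerivAt hder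
        (gcont.intervalIntegrable _ _)]
      have hpp : p r π = p r (-π) := by
        rw [hp_def]; simp [MVI_E_pi, MVI_E_neg_pi]
      have hEE : MVI_E π = MVI_E (-π) := by rw [MVI_E_pi, MVI_E_neg_pi]
      rw [hpp, hEE, sub_self]
    have hgθ : ∀ θ, g θ = r^2 * Qd (p r θ) (MVI_E θ * I) (MVI_E θ * I)
        - r * Fd (p r θ) (MVI_E θ) := by
      intro θ
      have e1 : (↑r * (MVI_E θ * I) : ℂ) = r • (MVI_E θ * I) := (Complex.real_smul).symm
      have e2 : (↑r * (MVI_E θ * I * I) : ℂ) = (-r) • (MVI_E θ) := by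
        rw [mul_assoc, Complex.I_mul_I, Complex.real_smul]
        push_cast
        ring
      rw [hg_def]
      simp only [e1, e2, _root_.map_smul, ContinuousLinearMap.smul_apply, smul_eq_mul]
      ring
    have hrot : ∀ θ, Qd (p r θ) (MVI_E θ) (MVI_E θ)
        + Qd (p r θ) (MVI_E θ * I) (MVI_E θ * I)
        = Qd (p r θ) 1 1 + Qd (p r θ) I I := by
      intro θ
      have h := MVI_rot (Qd (p r θ)) (Real.cos θ) (Real.sin θ)
        (by rw [← Real.cos_sq_add_sin_sq θ])
      rwa [← MVI_E_eq, ← MVI_IE_eq] at h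
    have hsum : B r + r * C r
        = ∫ θ in (-π)..π, (Fd (p r θ) (MVI_E θ) + r * Qd (p r θ) (MVI_E θ) (MVI_E θ)) := by
      rw [hB_def, hC_def, ← intervalIntegral.integral_const_mul,
        ← intervalIntegral.integral_add ((contF r habsr).intervalIntegrable _ _)
          ((show Continuous fun θ => r * Qd (p r θ) (MVI_E θ) (MVI_E θ) from
            continuous_const.mul (contQ r habsr)).intervalIntegrable _ _)]
    have hpoint : ∀ θ : ℝ, Fd (p r θ) (MVI_E θ) + r * Qd (p r θ) (MVI_E θ) (MVI_E θ)
        = r * (Qd (p r θ) 1 1 + Qd (p r θ) I I) + (-(1/r)) * g θ := by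
      intro θ
      rw [hgθ θ, ← hrot θ]
      field_simp
      ring
    rw [hsum]
    have : (∫ θ in (-π)..π, (Fd (p r θ) (MVI_E θ) + r * Qd (p r θ) (MVI_E θ) (MVI_E θ)))
        = ∫ θ in (-π)..π, (r * (Qd (p r θ) 1 1 + Qd (p r θ) I I) + (-(1/r)) * g θ) := by
      apply intervalIntegral.integral_congr
      intro θ _
      exact hpoint θ
    rw [this]
    have hcont1 : Continuous (fun θ => r * (Qd (p r θ) 1 1 + Qd (p r θ) I I)) := by
      have h1 : Continuous (fun θ => Qd (p r θ)) :=
        (hQc.mono hsub).comp_continuous (hpcθ r) (fun θ => hmem r θ habsr)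
      exact continuous_const.mul (((h1.clm_apply continuous_const).clm_apply continuous_const).add
        ((h1.clm_apply continuous_const).clm_apply continuous_const))
    rw [intervalIntegral.integral_add (hcont1.intervalIntegrable _ _)
      ((show Continuous fun θ => (-(1/r)) * g θ from continuous_const.mul gcont).intervalIntegrable _ _),
      intervalIntegral.integral_const_mul, intervalIntegral.integral_const_mul, hg0]
    simp only [mul_zero, add_zero]
    apply mul_nonneg hr0.le
    apply intervalIntegral.integral_nonneg (by linarith [Real.pi_pos])
    intro θ _
    exact hΔ _ (hmemV r θ habsr)
  have hφd : ∀ r ∈ Set.Icc (0:ℝ) ρ, HasDerivAt (fun r => r * B r) (B r + r * C r) r := by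
    intro r hr
    have := (hasDerivAt_id r).mul (keyB r hr)
    simpa [Pi.mul_def] using this
  have hφmono : MonotoneOn (fun r => r * B r) (Set.Icc 0 ρ) := by
    apply monotoneOn_of_deriv_nonneg (convex_Icc 0 ρ)
    · exact fun r hr => (hφd r hr).continuousAt.continuousWithinAt
    · intro r hr
      rw [interior_Icc] at hr
      exact ((hφd r (Set.Ioo_subset_Icc_self hr)).differentiableAt).differentiableWithinAt
    · intro r hr
      rw [interior_Icc] at hr
      rw [(hφd r (Set.Ioo_subset_Icc_self hr)).deriv]
      exact hBC r hr.1 hr.2.le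
  have hBnn : ∀ r ∈ Set.Ioc (0:ℝ) ρ, 0 ≤ B r := by
    intro r hr
    have h0 : (0:ℝ) ∈ Set.Icc (0:ℝ) ρ := ⟨le_rfl, hρ.le⟩
    have h1 := hφmono h0 ⟨hr.1.le, hr.2⟩ hr.1.le
    simp only [zero_mul] at h1
    nlinarith [hr.1]
  have hAmono : MonotoneOn A (Set.Icc 0 ρ) := by
    apply monotoneOn_of_deriv_nonneg (convex_Icc 0 ρ)
    · exact fun r hr => (keyA r hr).continuousAt.continuousWithinAt
    · intro r hr
      rw [interior_Icc] at hr
      exact (keyA r (Set.Ioo_subset_Icc_self hr)).differentiableAt.differentiableWithinAt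
    · intro r hr
      rw [interior_Icc] at hr
      rw [(keyA r (Set.Ioo_subset_Icc_self hr)).deriv]
      exact hBnn r ⟨hr.1, hr.2.le⟩
  have hA0 : A 0 = 2 * π * u z₀ := by
    rw [hA_def]
    have : ∀ θ : ℝ, u (p 0 θ) = u z₀ := by
      intro θ
      rw [hp_def]
      norm_num
    simp only [this]
    rw [intervalIntegral.integral_const, smul_eq_mul]
    ring
  have hAge : ∀ r ∈ Set.Icc (0:ℝ) ρ, 2 * π * u z₀ ≤ A r := by
    intro r hr
    rw [← hA0]
    exact hAmono ⟨le_rfl, hρ.le⟩ hr hr.1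
  -- polar coordinates
  set T : Set (ℝ × ℝ) := Set.Ioo (0:ℝ) ρ ×ˢ Set.Ioo (-π) π with hT_def
  have hTmeas : MeasurableSet T := measurableSet_Ioo.prod measurableSet_Ioo
  have hπ : -π ≤ π := by linarith [Real.pi_pos]
  have htrans : ∫ z in Metric.ball z₀ ρ, u z = ∫ z in Metric.ball (0:ℂ) ρ, u (z₀ + z) := by
    have hmp : MeasurePreserving (fun z : ℂ => z₀ + z) volume volume :=
      measurePreserving_add_left volume z₀
    have hemb : MeasurableEmbedding (fun z : ℂ => z₀ + z) :=
      (MeasurableEquiv.addLeft z₀).measurableEmbedding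
    have himg : (fun z : ℂ => z₀ + z) '' Metric.ball 0 ρ = Metric.ball z₀ ρ := by
      ext w
      simp only [Set.mem_image, Metric.mem_ball, dist_eq_norm, sub_zero]
      constructor
      · rintro ⟨v, hv, rfl⟩
        simpa [add_sub_cancel_left] using hv
      · intro hw
        exact ⟨w - z₀, by simpa [norm_sub_rev] using (by rwa [norm_sub_rev] at hw), by ring⟩
    rw [← himg, hmp.setIntegral_image_emb hemb]
  have hind : ∫ z in Metric.ball (0:ℂ) ρ, u (z₀ + z)
      = ∫ z, Set.indicator (Metric.ball (0:ℂ) ρ) (fun z => u (z₀ + z)) z :=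
    (MeasureTheory.integral_indicator Metric.isOpen_ball.measurableSet).symm
  have hpolar := Complex.integral_comp_polarCoord_symm
      (Set.indicator (Metric.ball (0:ℂ) ρ) (fun z => u (z₀ + z)))
  have hcongr : Set.EqOn
      (fun q : ℝ × ℝ =>
        q.1 • Set.indicator (Metric.ball (0:ℂ) ρ) (fun z => u (z₀ + z))
          (Complex.polarCoord.symm q))
      (Set.indicator T (fun q : ℝ × ℝ => q.1 * u (p q.1 q.2)))
      polarCoord.target := by
    rintro ⟨r, θ⟩ hq
    rw [polarCoord_target] at hq
    obtain ⟨hr, hθ⟩ := hq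
    rw [Set.mem_Ioi] at hr
    have hsymm : Complex.polarCoord.symm (r, θ) = ↑r * MVI_E θ := by
      rw [Complex.polarCoord_symm_apply]
      simp only [MVI_E, Complex.exp_mul_I, Complex.ofReal_cos, Complex.ofReal_sin]
    simp only [hsymm]
    by_cases hcase : r < ρ
    · have hmem1 : (↑r * MVI_E θ : ℂ) ∈ Metric.ball (0:ℂ) ρ := by
        rw [Metric.mem_ball, dist_zero_right, norm_mul, MVI_E_norm, mul_one,
          Complex.norm_real, Real.norm_eq_abs, abs_of_pos hr]
        exact hcase
      have hmem2 : (r, θ) ∈ T := ⟨⟨hr, hcase⟩, hθ⟩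
      rw [Set.indicator_of_mem hmem1, Set.indicator_of_mem hmem2]
      simp [hp_def, smul_eq_mul]
    · have hmem1 : (↑r * MVI_E θ : ℂ) ∉ Metric.ball (0:ℂ) ρ := by
        rw [Metric.mem_ball, dist_zero_right, norm_mul, MVI_E_norm, mul_one,
          Complex.norm_real, Real.norm_eq_abs, abs_of_pos hr]
        exact hcase
      have hmem2 : (r, θ) ∉ T := fun h => hcase h.1.2
      rw [Set.indicator_of_notMem hmem1, Set.indicator_of_notMem hmem2, smul_zero]
  have hTsub : T ⊆ polarCoord.target := by
    rintro ⟨r, θ⟩ ⟨h1, h2⟩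
    rw [polarCoord_target]
    exact ⟨h1.1, h2⟩
  have hstep : ∫ z in Metric.ball z₀ ρ, u z = ∫ q in T, q.1 * u (p q.1 q.2) := by
    rw [htrans, hind, ← hpolar,
      setIntegral_congr_fun polarCoord.open_target.measurableSet hcongr,
      setIntegral_indicator hTmeas, Set.inter_eq_self_of_subset_right hTsub]
  -- integrability on the product
  have hcontT : ContinuousOn (fun q : ℝ × ℝ => q.1 * u (p q.1 q.2))
      (Set.Icc (0:ℝ) ρ ×ˢ Set.Icc (-π) π) := by
    apply ContinuousOn.mul continuous_fst.continuousOn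
    apply (hu.continuousOn.mono hsub).comp hpc.continuousOn
    intro q hq
    apply hmem
    rw [abs_le]
    refine ⟨by linarith [hq.1.1], by linarith [hq.1.2]⟩
  have hintT : IntegrableOn (fun q : ℝ × ℝ => q.1 * u (p q.1 q.2)) T volume := by
    apply IntegrableOn.mono_set
      (hcontT.integrableOn_compact (isCompact_Icc.prod isCompact_Icc))
    exact Set.prod_mono Set.Ioo_subset_Icc_self Set.Ioo_subset_Icc_self
  have hfub : ∫ q in T, q.1 * u (p q.1 q.2)
      = ∫ r in Set.Ioo (0:ℝ) ρ, ∫ θ in Set.Ioo (-π) π, r * u (p r θ) := by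
    rw [hT_def]
    rw [MeasureTheory.Measure.volume_eq_prod] at hintT ⊢
    exact setIntegral_prod _ (by rwa [hT_def] at hintT)
  have hinner : ∀ r ∈ Set.Ioo (0:ℝ) ρ,
      (∫ θ in Set.Ioo (-π) π, r * u (p r θ)) = r * A r := by
    intro r hr
    rw [hA_def]
    rw [← integral_Ioc_eq_integral_Ioo, ← intervalIntegral.integral_of_le hπ,
      intervalIntegral.integral_const_mul]
  have hfub2 : (∫ r in Set.Ioo (0:ℝ) ρ, ∫ θ in Set.Ioo (-π) π, r * u (p r θ))
      = ∫ r in Set.Ioo (0:ℝ) ρ, r * A r :=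
    setIntegral_congr_fun measurableSet_Ioo hinner
  have contA : ContinuousOn A (Set.Icc 0 ρ) :=
    fun r hr => (keyA r hr).continuousAt.continuousWithinAt
  have hintA : IntegrableOn (fun r => r * A r) (Set.Ioo (0:ℝ) ρ) volume := by
    apply IntegrableOn.mono_set
      ((continuousOn_id.mul contA).integrableOn_compact isCompact_Icc)
    exact Set.Ioo_subset_Icc_self
  have hlow : (∫ r in Set.Ioo (0:ℝ) ρ, (2 * π * u z₀) * r)
      ≤ ∫ r in Set.Ioo (0:ℝ) ρ, r * A r := by
    apply setIntegral_mono_on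
    · apply IntegrableOn.mono_set
        (((continuous_const.mul continuous_id).continuousOn).integrableOn_compact isCompact_Icc)
      exact Set.Ioo_subset_Icc_self
    · exact hintA
    · exact measurableSet_Ioo
    · intro r hr
      rw [mul_comm]
      exact mul_le_mul_of_nonneg_left (hAge r ⟨hr.1.le, hr.2.le⟩) hr.1.le
  have hval : (∫ r in Set.Ioo (0:ℝ) ρ, (2 * π * u z₀) * r) = π * ρ^2 * u z₀ := by
    rw [← integral_Ioc_eq_integral_Ioo, ← intervalIntegral.integral_of_le hρ.le,
      intervalIntegral.integral_const_mul, integral_id]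
    ring
  calc π * ρ^2 * u z₀ = ∫ r in Set.Ioo (0:ℝ) ρ, (2 * π * u z₀) * r := hval.symm
    _ ≤ ∫ r in Set.Ioo (0:ℝ) ρ, r * A r := hlow
    _ = ∫ z in Metric.ball z₀ ρ, u z := by rw [hstep, hfub, hfub2]

lemma MVI_hasDerivAt_horiz (y : ℝ) (t : ℝ) :
    HasDerivAt (fun t : ℝ => (⟨t, y⟩ : ℂ)) 1 t := by
  have h : (fun t : ℝ => (⟨t, y⟩ : ℂ)) = fun t : ℝ => (↑t + ↑y * I) := by
    funext t; exact Complex.mk_eq_add_mul_I _ _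
  rw [h]
  simpa using (Complex.ofRealCLM.hasDerivAt (x := t)).add_const (↑y * I)

lemma MVI_hasDerivAt_vert (x : ℝ) (t : ℝ) :
    HasDerivAt (fun t : ℝ => (⟨x, t⟩ : ℂ)) I t := by
  have h : (fun t : ℝ => (⟨x, t⟩ : ℂ)) = fun t : ℝ => (↑x + ↑t * I) := by
    funext t; exact Complex.mk_eq_add_mul_I _ _
  rw [h]
  simpa using ((Complex.ofRealCLM.hasDerivAt (x := t)).mul_const I).const_add (↑x : ℂ)

lemma MVI_second_horiz (u : ℂ → ℝ) (hu : ContDiffOn ℝ 2 u {z : ℂ | 0 < z.im})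
    (x y : ℝ) (hy : 0 < y) :
    deriv (fun s => deriv (fun t => u ⟨t, y⟩) s) x
      = fderiv ℝ (fun w => fderiv ℝ u w) ⟨x, y⟩ 1 1 := by
  have hV : IsOpen {z : ℂ | 0 < z.im} := isOpen_lt continuous_const Complex.continuous_im
  have hFd : ∀ z ∈ {z : ℂ | 0 < z.im}, HasFDerivAt u (fderiv ℝ u z) z := fun z hz =>
    (((hu.differentiableOn (by norm_num)) z hz).differentiableAt (hV.mem_nhds hz)).hasFDerivAt
  have hF1 : ContDiffOn ℝ 1 (fun w => fderiv ℝ u w) {z : ℂ | 0 < z.im} :=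
    hu.fderiv_of_isOpen hV (by norm_num)
  have hQd : HasFDerivAt (fun w => fderiv ℝ u w)
      (fderiv ℝ (fun w => fderiv ℝ u w) ⟨x, y⟩) ⟨x, y⟩ :=
    (((hF1.differentiableOn (by norm_num)) _ hy).differentiableAt (hV.mem_nhds hy)).hasFDerivAt
  have inner : ∀ s : ℝ, deriv (fun t => u ⟨t, y⟩) s = fderiv ℝ u ⟨s, y⟩ 1 := by
    intro s
    have := (hFd ⟨s, y⟩ hy).comp_hasDerivAt s (MVI_hasDerivAt_horiz y s)
    exact this.deriv
  have outer : HasDerivAt (fun s => fderiv ℝ u ⟨s, y⟩ 1)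
      (fderiv ℝ (fun w => fderiv ℝ u w) ⟨x, y⟩ 1 1) x := by
    have h1 : HasDerivAt (fun s : ℝ => fderiv ℝ u ⟨s, y⟩)
        (fderiv ℝ (fun w => fderiv ℝ u w) ⟨x, y⟩ 1) x :=
      hQd.comp_hasDerivAt x (MVI_hasDerivAt_horiz y x)
    simpa using h1.clm_apply (hasDerivAt_const x (1 : ℂ))
  calc deriv (fun s => deriv (fun t => u ⟨t, y⟩) s) x
      = deriv (fun s => fderiv ℝ u ⟨s, y⟩ 1) x := by
        congr 1; funext s; exact inner s
    _ = _ := outer.deriv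

lemma MVI_second_vert (u : ℂ → ℝ) (hu : ContDiffOn ℝ 2 u {z : ℂ | 0 < z.im})
    (x y : ℝ) (hy : 0 < y) :
    deriv (fun s => deriv (fun t => u ⟨x, t⟩) s) y
      = fderiv ℝ (fun w => fderiv ℝ u w) ⟨x, y⟩ I I := by
  have hV : IsOpen {z : ℂ | 0 < z.im} := isOpen_lt continuous_const Complex.continuous_im
  have hFd : ∀ z ∈ {z : ℂ | 0 < z.im}, HasFDerivAt u (fderiv ℝ u z) z := fun z hz =>
    (((hu.differentiableOn (by norm_num)) z hz).differentiableAt (hV.mem_nhds hz)).hasFDerivAt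
  have hF1 : ContDiffOn ℝ 1 (fun w => fderiv ℝ u w) {z : ℂ | 0 < z.im} :=
    hu.fderiv_of_isOpen hV (by norm_num)
  have hQd : HasFDerivAt (fun w => fderiv ℝ u w)
      (fderiv ℝ (fun w => fderiv ℝ u w) ⟨x, y⟩) ⟨x, y⟩ :=
    (((hF1.differentiableOn (by norm_num)) _ hy).differentiableAt (hV.mem_nhds hy)).hasFDerivAt
  have inner : ∀ s ∈ Set.Ioi (0:ℝ), deriv (fun t => u ⟨x, t⟩) s = fderiv ℝ u ⟨x, s⟩ I := by
    intro s hs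
    exact ((hFd ⟨x, s⟩ hs).comp_hasDerivAt s (MVI_hasDerivAt_vert x s)).deriv
  have heq : (fun s => deriv (fun t => u ⟨x, t⟩) s) =ᶠ[nhds y]
      (fun s => fderiv ℝ u ⟨x, s⟩ I) := by
    filter_upwards [isOpen_Ioi.mem_nhds hy] with s hs using inner s hs
  have outer : HasDerivAt (fun s => fderiv ℝ u ⟨x, s⟩ I)
      (fderiv ℝ (fun w => fderiv ℝ u w) ⟨x, y⟩ I I) y := by
    have h1 : HasDerivAt (fun s : ℝ => fderiv ℝ u ⟨x, s⟩)
        (fderiv ℝ (fun w => fderiv ℝ u w) ⟨x, y⟩ I) y :=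
      hQd.comp_hasDerivAt y (MVI_hasDerivAt_vert x y)
    simpa using h1.clm_apply (hasDerivAt_const y (I : ℂ))
  rw [heq.deriv_eq]
  exact outer.deriv

lemma MVI_laplacian_nonneg (u : ℂ → ℝ) (hu : ContDiffOn ℝ 2 u {z : ℂ | 0 < z.im})
    (h0 : ∀ z : ℂ, 0 < z.im → 0 ≤ u z)
    (hpde : ∀ x y : ℝ, 0 < y →
      y ^ 2 * (deriv (fun s => deriv (fun t => u ⟨t, y⟩) s) x
          + deriv (fun s => deriv (fun t => u ⟨x, t⟩) s) y)
        = 2 * u ⟨x, y⟩) :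
    ∀ z : ℂ, 0 < z.im →
      0 ≤ fderiv ℝ (fun w => fderiv ℝ u w) z 1 1
          + fderiv ℝ (fun w => fderiv ℝ u w) z I I := by
  intro z hz
  obtain ⟨x, y⟩ := z
  have hy : 0 < y := hz
  have h := hpde x y hy
  rw [MVI_second_horiz u hu x y hy, MVI_second_vert u hu x y hy] at h
  have hu0 := h0 ⟨x, y⟩ hy
  nlinarith [sq_nonneg y, mul_pos hy hy]


end MVIAux

open UpperHalfPlane MeasureTheory

/-- Mean value inequality for nonnegative `2`-eigenfunctions of the hyperbolic
Laplacian: there is a universal `c > 0` such that for every `C²` function `u ≥ 0` on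
the upper half-plane with `y²(uₓₓ + u_yy) = 2u`, and every `z₀ ∈ ℍ`,
`u(z₀) ≤ c ∫_{B(z₀,1)} u dA`, where `B(z₀,1)` is the hyperbolic unit ball and
`dA = y⁻² dx dy` is the hyperbolic area element. -/
theorem mean_value_inequality_eigenfunction :
    ∃ c : ℝ, 0 < c ∧
      ∀ u : ℂ → ℝ,
        ContDiffOn ℝ 2 u {z : ℂ | 0 < z.im} →
        (∀ z : ℂ, 0 < z.im → 0 ≤ u z) →
        (∀ x y : ℝ, 0 < y →
          y ^ 2 * (deriv (fun s => deriv (fun t => u ⟨t, y⟩) s) x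
              + deriv (fun s => deriv (fun t => u ⟨x, t⟩) s) y)
            = 2 * u ⟨x, y⟩) →
        ∀ z₀ : ℍ,
          u (z₀ : ℂ)
            ≤ c * ∫ z in ((fun w : ℍ => (w : ℂ)) '' Metric.ball z₀ 1), u z / z.im ^ 2 := by
  refine ⟨9 / Real.pi, by positivity, ?_⟩
  intro u hu hpos hpde z₀
  set y₀ : ℝ := (z₀ : ℂ).im with hy₀_def
  have hy₀ : 0 < y₀ := z₀.2
  have hV : IsOpen {z : ℂ | 0 < z.im} := isOpen_lt continuous_const Complex.continuous_im
  have hΔ := MVI_laplacian_nonneg u hu hpos hpde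
  -- the sub-mean value inequality on the euclidean ball of radius y₀/2
  have hsubV : Metric.closedBall (z₀ : ℂ) (3 * y₀ / 4) ⊆ {z : ℂ | 0 < z.im} := by
    intro w hw
    rw [Metric.mem_closedBall, Complex.dist_eq] at hw
    have h1 : |(w - (z₀ : ℂ)).im| ≤ 3 * y₀ / 4 :=
      le_trans (Complex.abs_im_le_norm _) hw
    rw [Complex.sub_im, abs_le] at h1
    have : 0 < w.im := by linarith [h1.1]
    exact this
  have hmean := MVI_submean u {z : ℂ | 0 < z.im} hV hu
    (fun z hz => hΔ z hz) (z₀ : ℂ) (y₀ / 2) (3 * y₀ / 4) (by positivity) (by linarith) hsubV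
  -- the hyperbolic ball is a euclidean ball
  have hS : ((fun w : ℍ => (w : ℂ)) '' Metric.ball z₀ 1)
      = Metric.ball ((z₀.center 1 : ℍ) : ℂ) (z₀.im * Real.sinh 1) :=
    UpperHalfPlane.image_coe_ball z₀ 1
  set c₀ : ℂ := ((z₀.center 1 : ℍ) : ℂ) with hc₀_def
  set R : ℝ := z₀.im * Real.sinh 1 with hR_def
  have hc₀im : c₀.im = y₀ * Real.cosh 1 := by
    rw [hc₀_def, UpperHalfPlane.coe_im, UpperHalfPlane.center_im, hy₀_def,
      UpperHalfPlane.coe_im]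
  have hc₀re : c₀.re = (z₀ : ℂ).re := by
    rw [hc₀_def, UpperHalfPlane.coe_re, UpperHalfPlane.center_re, UpperHalfPlane.coe_re]
  have hzim : z₀.im = y₀ := by rw [hy₀_def, UpperHalfPlane.coe_im]
  -- exp facts
  have hcosh1 : 0 < Real.cosh 1 - Real.sinh 1 := by
    rw [Real.cosh_sub_sinh]; exact Real.exp_pos _
  have hexp_half : Real.exp (-1) < 1 / 2 := by
    have h2e : (2 : ℝ) < Real.exp 1 := by
      have := Real.exp_one_gt_d9; linarith
    have hprod : Real.exp (-1) * Real.exp 1 = 1 := by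
      rw [← Real.exp_add]; norm_num
    nlinarith [Real.exp_pos (-1)]
  have hcs : Real.cosh 1 - Real.sinh 1 < 1 / 2 := by
    rw [Real.cosh_sub_sinh]; exact hexp_half
  have hone_cosh : 1 ≤ Real.cosh 1 := Real.one_le_cosh 1
  -- points of the closed euclidean ball have positive imaginary part
  have hKpos : ∀ w ∈ Metric.closedBall c₀ R, y₀ * (Real.cosh 1 - Real.sinh 1) ≤ w.im := by
    intro w hw
    rw [Metric.mem_closedBall, Complex.dist_eq] at hw
    have h1 : |(w - c₀).im| ≤ R := le_trans (Complex.abs_im_le_norm _) hw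
    rw [Complex.sub_im, abs_le, hc₀im] at h1
    rw [hR_def, hzim] at h1
    nlinarith [h1.1]
  have hKpos' : ∀ w ∈ Metric.closedBall c₀ R, 0 < w.im := fun w hw =>
    lt_of_lt_of_le (by positivity) (hKpos w hw)
  have hKV : Metric.closedBall c₀ R ⊆ {z : ℂ | 0 < z.im} := fun w hw => hKpos' w hw
  -- integrability of u z / z.im ^ 2 on the hyperbolic ball
  have hfc : ContinuousOn (fun z : ℂ => u z / z.im ^ 2) (Metric.closedBall c₀ R) := by
    apply ContinuousOn.div (hu.continuousOn.mono hKV)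
    · exact (Complex.continuous_im.continuousOn).pow 2
    · exact fun w hw => pow_ne_zero 2 (hKpos' w hw).ne'
  have hIf : IntegrableOn (fun z : ℂ => u z / z.im ^ 2)
      (Metric.ball c₀ R) volume :=
    (hfc.integrableOn_compact (isCompact_closedBall _ _)).mono_set
      Metric.ball_subset_closedBall
  -- the euclidean ball around z₀ sits inside the hyperbolic ball
  have hBS : Metric.ball (z₀ : ℂ) (y₀ / 2) ⊆ Metric.ball c₀ R := by
    intro w hw
    rw [Metric.mem_ball] at hw ⊢
    have hdz : dist (z₀ : ℂ) c₀ = y₀ * (Real.cosh 1 - 1) := by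
      rw [Complex.dist_of_re_eq hc₀re.symm, Real.dist_eq, hc₀im, hy₀_def,
        UpperHalfPlane.coe_im]
      rw [abs_of_nonpos (by nlinarith)]
      ring
    calc dist w c₀ ≤ dist w (z₀ : ℂ) + dist (z₀ : ℂ) c₀ := dist_triangle _ _ _
      _ < y₀ / 2 + y₀ * (Real.cosh 1 - 1) := by rw [hdz]; linarith
      _ ≤ R := by rw [hR_def, hzim]; nlinarith
  -- pointwise comparison on the small ball
  have hBim : ∀ w ∈ Metric.ball (z₀ : ℂ) (y₀ / 2), y₀ / 2 < w.im ∧ w.im < 3 * y₀ / 2 := by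
    intro w hw
    rw [Metric.mem_ball, Complex.dist_eq] at hw
    have h1 : |(w - (z₀ : ℂ)).im| < y₀ / 2 :=
      lt_of_le_of_lt (Complex.abs_im_le_norm _) hw
    rw [Complex.sub_im, abs_lt] at h1
    constructor <;> [linarith [h1.1]; linarith [h1.2]]
  have hIu : IntegrableOn u (Metric.ball (z₀ : ℂ) (y₀ / 2)) volume := by
    have hsubV2 : Metric.closedBall (z₀ : ℂ) (y₀ / 2) ⊆ {z : ℂ | 0 < z.im} := fun w hw =>
      hsubV (Metric.closedBall_subset_closedBall (by linarith) hw)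
    exact ((hu.continuousOn.mono hsubV2).integrableOn_compact
      (isCompact_closedBall _ _)).mono_set Metric.ball_subset_closedBall
  have hstep1 : (∫ z in Metric.ball (z₀ : ℂ) (y₀ / 2), u z)
      ≤ ∫ z in Metric.ball (z₀ : ℂ) (y₀ / 2), (3 * y₀ / 2) ^ 2 * (u z / z.im ^ 2) := by
    apply setIntegral_mono_on hIu ((hIf.mono_set hBS).const_mul _)
      Metric.isOpen_ball.measurableSet
    intro w hw
    obtain ⟨h1, h2⟩ := hBim w hw
    have hw0 : 0 < w.im := by linarith
    have hq : 0 ≤ u w / w.im ^ 2 := div_nonneg (hpos w hw0) (by positivity)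
    have heq : u w = w.im ^ 2 * (u w / w.im ^ 2) := by field_simp
    calc u w = w.im ^ 2 * (u w / w.im ^ 2) := heq
      _ ≤ (3 * y₀ / 2) ^ 2 * (u w / w.im ^ 2) :=
          mul_le_mul_of_nonneg_right (pow_le_pow_left₀ hw0.le (by linarith) 2) hq
  have hstep2 : (∫ z in Metric.ball (z₀ : ℂ) (y₀ / 2), (3 * y₀ / 2) ^ 2 * (u z / z.im ^ 2))
      = (3 * y₀ / 2) ^ 2 * ∫ z in Metric.ball (z₀ : ℂ) (y₀ / 2), u z / z.im ^ 2 :=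
    by rw [MeasureTheory.integral_const_mul]
  have hstep3 : (∫ z in Metric.ball (z₀ : ℂ) (y₀ / 2), u z / z.im ^ 2)
      ≤ ∫ z in Metric.ball c₀ R, u z / z.im ^ 2 := by
    apply setIntegral_mono_set hIf
    · have hae : ∀ᵐ (w : ℂ) ∂(volume.restrict (Metric.ball c₀ R)), 0 ≤ u w / w.im ^ 2 := by
        rw [MeasureTheory.ae_restrict_iff' Metric.isOpen_ball.measurableSet]
        exact MeasureTheory.ae_of_all _ fun w hw =>
          div_nonneg (hpos w (hKpos' w (Metric.ball_subset_closedBall hw))) (by positivity)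
      exact hae
    · exact HasSubset.Subset.eventuallyLE hBS
  -- put everything together
  rw [hS]
  set I : ℝ := ∫ z in Metric.ball c₀ R, u z / z.im ^ 2 with hI_def
  have hfinal : Real.pi * (y₀ / 2) ^ 2 * u (z₀ : ℂ) ≤ (3 * y₀ / 2) ^ 2 * I := by
    refine le_trans hmean (le_trans hstep1 ?_)
    rw [hstep2]
    exact mul_le_mul_of_nonneg_left hstep3 (by positivity)
  have hπ : 0 < Real.pi := Real.pi_pos
  rw [div_mul_eq_mul_div, le_div_iff₀ hπ]
  nlinarith [mul_pos hy₀ hy₀]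
end
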